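/- arXiv:2503.18721 — 8 statements merged into one kernel-verified Lean document; each statement's English description precedes it below -/
import Mathlib

section
/- Let d ≥ 2 and n ≥ 1, and for each j ∈ {1,…,d} let k^j : X^j × X^j → ℝ be a symmetric positive semidefinite kernel with 0 ≤ k^j(x,y) ≤ K^j for all x,y ∈ X^j. Then for every d-tuple π of permutations of {1,…,n} and all datasets X, X̃ of size n with d_ham(X, X̃) ≤ 1, one has |dHSIC^(X^π) − dHSIC^(X̃^π)| ≤ (2d/n)·(Π_{j=1}^d K^j)^{1/2}. -/
open Finset

noncomputable section

/-- A symmetric positive semidefinite kernel. -/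
def IsSymmPSDKernel {Y : Type*} (k : Y → Y → ℝ) : Prop :=
  (∀ x y, k x y = k y x) ∧
  ∀ (m : ℕ) (x : Fin m → Y) (c : Fin m → ℝ),
    0 ≤ ∑ a : Fin m, ∑ b : Fin m, c a * c b * k (x a) (x b)

/-- Squared empirical dHSIC (V-statistic) of a dataset of size `n`. -/
def Vstat {d n : ℕ} {X : Fin d → Type*} (k : ∀ j, X j → X j → ℝ)
    (D : Fin n → ∀ j, X j) : ℝ :=
  ((n : ℝ) ^ 2)⁻¹ * ∑ i₁ : Fin n, ∑ i₂ : Fin n, ∏ j, k j (D i₁ j) (D i₂ j)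
    + ((n : ℝ) ^ (2 * d))⁻¹ *
        ∑ a : Fin d → Fin n, ∑ b : Fin d → Fin n, ∏ j, k j (D (a j) j) (D (b j) j)
    - 2 * ((n : ℝ) ^ (d + 1))⁻¹ *
        ∑ i₁ : Fin n, ∑ c : Fin d → Fin n, ∏ j, k j (D i₁ j) (D (c j) j)

/-- Empirical dHSIC. -/
def dHSICemp {d n : ℕ} {X : Fin d → Type*} (k : ∀ j, X j → X j → ℝ)
    (D : Fin n → ∀ j, X j) : ℝ :=
  Real.sqrt (Vstat k D)

/-- Dataset permuted by a `d`-tuple of permutations. -/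
def permuteD {d n : ℕ} {X : Fin d → Type*} (π : Fin d → Equiv.Perm (Fin n))
    (D : Fin n → ∀ j, X j) : Fin n → ∀ j, X j :=
  fun i j => D (π j i) j

/-- Hamming distance between two datasets. -/
def hamD {d n : ℕ} {X : Fin d → Type*} (D D' : Fin n → ∀ j, X j) : ℕ :=
  Set.ncard {i | D i ≠ D' i}

/-!
`V(X)` is the squared norm, in the feature space of the product kernel `∏ⱼ kʲ`, of the
difference between the embedding of the joint empirical measure `n⁻¹ ∑ᵢ δ_{Xᵢ}` and that of the
product of the empirical marginals. Both measures live on the `nᵈ` tuple points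
`(X¹_{a₁}, …, Xᵈ_{a_d})`, so `V(X) = cᵀ G c` for a fixed weight vector `c` and the Gram matrix `G`
of these points, which is positive semidefinite by the Schur product theorem. Hence `dHSIC^` is a
seminorm of `c`, and `|dHSIC^(Z) - dHSIC^(Z')|` is at most the norm of `∑ₐ cₐ (φ(Zₐ) - φ(Z'ₐ))`.

Permuting the columns keeps at most one differing entry per column, so replacing one column at a
time reduces the claim to datasets differing in a single entry `(i₀, j₀)`. Then only tuples with
`a_{j₀} = i₀` contribute; for them `‖φ_{j₀}(x) - φ_{j₀}(x')‖² ≤ 2 K^{j₀}`, the other kernels lie in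
`[0, Kʲ]`, and `c` is the difference of two nonnegative weights, each of mass `1/n` on those
tuples. This bounds the squared norm by `(2/n)² ∏ⱼ Kʲ`, and each of the `d` columns costs `2/n`.
-/

open Matrix

theorem IsSymmPSDKernel.posSemidef {Y : Type*} {k : Y → Y → ℝ} (hk : IsSymmPSDKernel k) :
    (Matrix.of k).PosSemidef := by
  refine ⟨Matrix.ext fun x y => hk.1 y x, fun c => ?_⟩
  let e := c.support.equivFin
  have h := hk.2 _ (fun a => (e.symm a : Y)) (fun a => c (e.symm a))
  simp only [fun i : c.support => e.symm.sum_comp fun j : c.support => c i * c j * k i j,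
    e.symm.sum_comp fun i : c.support => ∑ j : c.support, c i * c j * k i j] at h
  simpa [Finsupp.sum, ← Finset.sum_coe_sort c.support, mul_right_comm] using h

theorem Matrix.PosSemidef.abs_sqrt_dotProduct_mulVec_sub_le {ι : Type*} [Fintype ι]
    {M : Matrix ι ι ℝ} (hM : M.PosSemidef) (f g : ι → ℝ) :
    |√(f ⬝ᵥ M *ᵥ f) - √(g ⬝ᵥ M *ᵥ g)| ≤ √((f - g) ⬝ᵥ M *ᵥ (f - g)) := by
  have hnorm (x : ι → ℝ) :
      @norm _ (M.toSeminormedAddCommGroup hM).toNorm x = √(x ⬝ᵥ M *ᵥ x) := by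
    rw [@norm_eq_sqrt_re_inner ℝ _ _ (M.toSeminormedAddCommGroup hM) (M.toInnerProductSpace hM),
      dotProduct_comm]
    rfl
  simpa only [hnorm] using @abs_norm_sub_norm_le _ (M.toSeminormedAddCommGroup hM) f g

theorem sum_sum_sub_mul_sub_mul_le {ι : Type*} (s : Finset ι) {u v : ι → ℝ}
    (hu : ∀ a ∈ s, 0 ≤ u a) (hv : ∀ a ∈ s, 0 ≤ v a) {R : ι → ι → ℝ} {M : ℝ}
    (hR : ∀ a ∈ s, ∀ b ∈ s, 0 ≤ R a b ∧ R a b ≤ M) :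
    ∑ a ∈ s, ∑ b ∈ s, (u a - v a) * (u b - v b) * R a b ≤
      M * ((∑ a ∈ s, u a) ^ 2 + (∑ a ∈ s, v a) ^ 2) := by
  calc ∑ a ∈ s, ∑ b ∈ s, (u a - v a) * (u b - v b) * R a b
      ≤ ∑ a ∈ s, ∑ b ∈ s, M * (u a * u b + v a * v b) := by
        refine sum_le_sum fun a ha => sum_le_sum fun b hb => ?_
        obtain ⟨hR₀, hRM⟩ := hR a ha b hb
        nlinarith [mul_nonneg (mul_nonneg (hu a ha) (hv b hb)) hR₀,
          mul_nonneg (mul_nonneg (hv a ha) (hu b hb)) hR₀,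
          mul_le_mul_of_nonneg_left hRM (add_nonneg (mul_nonneg (hu a ha) (hu b hb))
            (mul_nonneg (hv a ha) (hv b hb)))]
    _ = M * ((∑ a ∈ s, u a) ^ 2 + (∑ a ∈ s, v a) ^ 2) := by
        simp only [mul_add, sum_add_distrib, ← mul_sum, sq, sum_mul_sum]

/-- `kernelDistSq k x y = ‖φ x - φ y‖²` for a feature map `φ` of `k`. -/
def kernelDistSq {Y : Type*} (k : Y → Y → ℝ) (x y : Y) : ℝ :=
  k x x - k x y - k y x + k y y

theorem IsSymmPSDKernel.kernelDistSq_nonneg {Y : Type*} {k : Y → Y → ℝ}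
    (hk : IsSymmPSDKernel k) (x y : Y) : 0 ≤ kernelDistSq k x y := by
  have h := hk.2 2 ![x, y] ![1, -1]
  simp only [Fin.sum_univ_two, Matrix.cons_val_zero, Matrix.cons_val_one] at h
  rw [kernelDistSq]
  linarith

theorem kernelDistSq_le {Y : Type*} {k : Y → Y → ℝ} {K : ℝ}
    (hk : ∀ x y, 0 ≤ k x y ∧ k x y ≤ K) (x y : Y) : kernelDistSq k x y ≤ 2 * K := by
  rw [kernelDistSq]
  linarith [hk x x, hk x y, hk y x, hk y y]

section ProdKernel

variable {d : ℕ} {X : Fin d → Type*} {ι κ : Type*} {k : ∀ j, X j → X j → ℝ}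

def prodKernelMatrix (k : ∀ j, X j → X j → ℝ) (p : ι → ∀ j, X j) (q : κ → ∀ j, X j) :
    Matrix ι κ ℝ :=
  Matrix.of fun a b => ∏ j, k j (p a j) (q b j)

/-- The Gram matrix of the feature differences `φ (p a) - φ (q a)` of the product kernel. -/
def diffKernelMatrix (k : ∀ j, X j → X j → ℝ) (p q : ι → ∀ j, X j) : Matrix ι ι ℝ :=
  prodKernelMatrix k p p - prodKernelMatrix k p q - prodKernelMatrix k q p +
    prodKernelMatrix k q q

theorem posSemidef_prodKernelMatrix [Finite ι] (hk : ∀ j, IsSymmPSDKernel (k j))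
    (p : ι → ∀ j, X j) : (prodKernelMatrix k p p).PosSemidef := by
  classical
  suffices h : ∀ s : Finset (Fin d),
      (Matrix.of fun a b => ∏ j ∈ s, k j (p a j) (p b j)).PosSemidef from h univ
  intro s
  induction s using Finset.induction_on with
  | empty => simpa [vecMulVec] using posSemidef_vecMulVec_self_star (1 : ι → ℝ)
  | insert j s hj ih =>
    have hsplit : (Matrix.of fun a b => ∏ j ∈ insert j s, k j (p a j) (p b j)) =
        (Matrix.of (k j)).submatrix (p · j) (p · j) ⊙
          Matrix.of fun a b => ∏ j ∈ s, k j (p a j) (p b j) := by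
      ext a b
      simp [prod_insert hj]
    rw [hsplit]
    exact ((hk j).posSemidef.submatrix _).hadamard ih

theorem transpose_prodKernelMatrix (hk : ∀ j x y, k j x y = k j y x)
    (p : ι → ∀ j, X j) (q : κ → ∀ j, X j) :
    (prodKernelMatrix k p q)ᵀ = prodKernelMatrix k q p := by
  ext b a
  simp only [transpose_apply, prodKernelMatrix, of_apply]
  exact prod_congr rfl fun j _ => hk j _ _

theorem abs_sqrt_prodKernelMatrix_sub_le [Fintype ι] (hk : ∀ j, IsSymmPSDKernel (k j))
    (p q : ι → ∀ j, X j) (c : ι → ℝ) :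
    |√(c ⬝ᵥ prodKernelMatrix k p p *ᵥ c) - √(c ⬝ᵥ prodKernelMatrix k q q *ᵥ c)| ≤
      √(c ⬝ᵥ diffKernelMatrix k p q *ᵥ c) := by
  have hblocks : prodKernelMatrix k (Sum.elim p q) (Sum.elim p q) =
      fromBlocks (prodKernelMatrix k p p) (prodKernelMatrix k p q)
        (prodKernelMatrix k q p) (prodKernelMatrix k q q) := by
    ext (a | a) (b | b) <;> rfl
  have hdiff : Sum.elim c (0 : ι → ℝ) - Sum.elim (0 : ι → ℝ) c = Sum.elim c (-c) := by
    ext (a | a) <;> simp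
  have h := (posSemidef_prodKernelMatrix hk (Sum.elim p q)).abs_sqrt_dotProduct_mulVec_sub_le
    (Sum.elim c 0) (Sum.elim 0 c)
  rw [hdiff] at h
  simp only [hblocks, fromBlocks_mulVec, sumElim_dotProduct_sumElim, Sum.elim_comp_inl,
    Sum.elim_comp_inr, mulVec_zero, add_zero, zero_add, zero_dotProduct, mulVec_neg,
    dotProduct_add, dotProduct_neg, neg_dotProduct] at h
  convert h using 3
  simp only [diffKernelMatrix, dotProduct_add, dotProduct_sub, add_mulVec, sub_mulVec]
  ring

theorem prod_eq_mul_prod_erase_of_ne (k : ∀ j, X j → X j → ℝ) (j₀ : Fin d)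
    {f g f' g' : ∀ j, X j} (hf : ∀ j ≠ j₀, f j = f' j) (hg : ∀ j ≠ j₀, g j = g' j) :
    ∏ j, k j (f j) (g j) = k j₀ (f j₀) (g j₀) * ∏ j ∈ univ.erase j₀, k j (f' j) (g' j) := by
  rw [← mul_prod_erase univ _ (mem_univ j₀)]
  congr 1
  refine prod_congr rfl fun j hj => ?_
  rw [hf j (ne_of_mem_erase hj), hg j (ne_of_mem_erase hj)]

end ProdKernel

section Vstat

variable {d n : ℕ} {X : Fin d → Type*} {k : ∀ j, X j → X j → ℝ}

def tuplePoints (D : Fin n → ∀ j, X j) : (Fin d → Fin n) → ∀ j, X j :=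
  fun a j => D (a j) j

def jointWeight (d n : ℕ) (a : Fin d → Fin n) : ℝ :=
  ∑ i : Fin n, if a = (fun _ => i) then (n : ℝ)⁻¹ else 0

def dhsicWeight (d n : ℕ) : (Fin d → Fin n) → ℝ :=
  jointWeight d n - Function.const _ ((n : ℝ) ^ d)⁻¹

theorem dotProduct_jointWeight (w : (Fin d → Fin n) → ℝ) :
    w ⬝ᵥ jointWeight d n = (n : ℝ)⁻¹ * ∑ i : Fin n, w (fun _ => i) := by
  simp only [dotProduct, jointWeight, mul_sum, mul_ite, mul_zero]
  rw [sum_comm]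
  simp [mul_comm]

theorem Vstat_eq_dhsicWeight_dotProduct (hk : ∀ j x y, k j x y = k j y x)
    (D : Fin n → ∀ j, X j) :
    Vstat k D = dhsicWeight d n ⬝ᵥ
      prodKernelMatrix k (tuplePoints D) (tuplePoints D) *ᵥ dhsicWeight d n := by
  set G := prodKernelMatrix k (tuplePoints D) (tuplePoints D)
  set v : (Fin d → Fin n) → ℝ := Function.const _ ((n : ℝ) ^ d)⁻¹
  have hsymm : v ⬝ᵥ G *ᵥ jointWeight d n = jointWeight d n ⬝ᵥ G *ᵥ v := by
    rw [← dotProduct_transpose_mulVec, transpose_prodKernelMatrix hk]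
  have hjj : jointWeight d n ⬝ᵥ G *ᵥ jointWeight d n =
      ((n : ℝ) ^ 2)⁻¹ * ∑ i₁ : Fin n, ∑ i₂ : Fin n, ∏ j, k j (D i₁ j) (D i₂ j) := by
    rw [dotProduct_comm, dotProduct_jointWeight]
    simp only [mulVec, dotProduct_jointWeight, mul_sum]
    simp [G, prodKernelMatrix, tuplePoints, sq, mul_assoc]
  have hjv : jointWeight d n ⬝ᵥ G *ᵥ v = (n : ℝ)⁻¹ * ((n : ℝ) ^ d)⁻¹ *
      ∑ i₁ : Fin n, ∑ c : Fin d → Fin n, ∏ j, k j (D i₁ j) (D (c j) j) := by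
    rw [dotProduct_comm, dotProduct_jointWeight]
    simp [mulVec, dotProduct, G, v, prodKernelMatrix, tuplePoints, mul_sum, mul_comm, mul_assoc]
  have hvv : v ⬝ᵥ G *ᵥ v = ((n : ℝ) ^ d)⁻¹ * ((n : ℝ) ^ d)⁻¹ *
      ∑ a : Fin d → Fin n, ∑ b : Fin d → Fin n, ∏ j, k j (D (a j) j) (D (b j) j) := by
    simp [mulVec, dotProduct, G, v, prodKernelMatrix, tuplePoints, mul_sum, mul_comm, mul_assoc]
  rw [dhsicWeight, sub_dotProduct, mulVec_sub, dotProduct_sub, dotProduct_sub, hsymm, hjj, hjv,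
    hvv, Vstat]
  ring

theorem card_filter_apply_eq (j₀ : Fin d) (i₀ : Fin n) :
    #{a : Fin d → Fin n | a j₀ = i₀} = n ^ (d - 1) := by
  simpa using Fintype.card_filter_piFinset_const_eq_of_mem (univ : Finset (Fin n)) j₀ (mem_univ i₀)

theorem sum_filter_jointWeight (j₀ : Fin d) (i₀ : Fin n) :
    ∑ a with a j₀ = i₀, jointWeight d n a = (n : ℝ)⁻¹ := by
  have h := dotProduct_jointWeight (d := d) (fun a => if a j₀ = i₀ then 1 else 0)
  simp only [dotProduct, ite_mul, one_mul, zero_mul, sum_ite_eq', mem_univ, if_true,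
    mul_one] at h
  rwa [sum_filter]

theorem sum_filter_inv_pow (j₀ : Fin d) (i₀ : Fin n) :
    ∑ _a : Fin d → Fin n with _a j₀ = i₀, ((n : ℝ) ^ d)⁻¹ = (n : ℝ)⁻¹ := by
  have hn : (n : ℝ) ≠ 0 := Nat.cast_ne_zero.2 (Fin.pos i₀).ne'
  rw [sum_const, card_filter_apply_eq, nsmul_eq_mul, Nat.cast_pow]
  obtain ⟨e, rfl⟩ := Nat.exists_eq_add_one.2 (Fin.pos j₀)
  rw [Nat.add_sub_cancel, pow_succ]
  field_simp

theorem diffKernelMatrix_tuplePoints_apply {j₀ : Fin d} {i₀ : Fin n}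
    {Z Z' : Fin n → ∀ j, X j} (hcol : ∀ i, ∀ j ≠ j₀, Z i j = Z' i j)
    (hrow : ∀ i ≠ i₀, Z i j₀ = Z' i j₀) (a b : Fin d → Fin n) :
    diffKernelMatrix k (tuplePoints Z) (tuplePoints Z') a b =
      if a j₀ = i₀ ∧ b j₀ = i₀ then
        kernelDistSq (k j₀) (Z i₀ j₀) (Z' i₀ j₀) *
          ∏ j ∈ univ.erase j₀, k j (Z (a j) j) (Z (b j) j)
      else 0 := by
  have hZ (c : Fin d → Fin n) : ∀ j ≠ j₀, tuplePoints Z c j = Z (c j) j := fun _ _ => rfl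
  have hZ' (c : Fin d → Fin n) : ∀ j ≠ j₀, tuplePoints Z' c j = Z (c j) j :=
    fun j hj => (hcol (c j) j hj).symm
  simp only [diffKernelMatrix, Matrix.add_apply, Matrix.sub_apply, prodKernelMatrix, of_apply]
  rw [prod_eq_mul_prod_erase_of_ne k j₀ (hZ a) (hZ b),
    prod_eq_mul_prod_erase_of_ne k j₀ (hZ a) (hZ' b),
    prod_eq_mul_prod_erase_of_ne k j₀ (hZ' a) (hZ b),
    prod_eq_mul_prod_erase_of_ne k j₀ (hZ' a) (hZ' b)]
  simp only [tuplePoints]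
  split_ifs with h
  · rw [h.1, h.2, kernelDistSq]
    ring
  · rcases not_and_or.1 h with ha | hb
    · rw [hrow _ ha]
      ring
    · rw [hrow _ hb]
      ring

theorem dhsicWeight_dotProduct_diffKernelMatrix_le {K : Fin d → ℝ}
    (hpsd : ∀ j, IsSymmPSDKernel (k j)) (hbdd : ∀ j, ∀ x y : X j, 0 ≤ k j x y ∧ k j x y ≤ K j)
    {j₀ : Fin d} {i₀ : Fin n} {Z Z' : Fin n → ∀ j, X j} (hcol : ∀ i, ∀ j ≠ j₀, Z i j = Z' i j)
    (hrow : ∀ i ≠ i₀, Z i j₀ = Z' i j₀) :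
    dhsicWeight d n ⬝ᵥ diffKernelMatrix k (tuplePoints Z) (tuplePoints Z') *ᵥ dhsicWeight d n ≤
      (2 / n) ^ 2 * ∏ j, K j := by
  set Δ := kernelDistSq (k j₀) (Z i₀ j₀) (Z' i₀ j₀)
  set R : (Fin d → Fin n) → (Fin d → Fin n) → ℝ :=
    fun a b => ∏ j ∈ univ.erase j₀, k j (Z (a j) j) (Z (b j) j)
  set v : (Fin d → Fin n) → ℝ := Function.const _ ((n : ℝ) ^ d)⁻¹
  set S := ({a | a j₀ = i₀} : Finset (Fin d → Fin n))
  set Kr := ∏ j ∈ univ.erase j₀, K j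
  have hK (j : Fin d) : 0 ≤ K j := (hbdd j _ _).1.trans (hbdd j (Z i₀ j) (Z i₀ j)).2
  have hquad : dhsicWeight d n ⬝ᵥ diffKernelMatrix k (tuplePoints Z) (tuplePoints Z') *ᵥ
      dhsicWeight d n =
      Δ * ∑ a ∈ S, ∑ b ∈ S, (jointWeight d n a - v a) * (jointWeight d n b - v b) * R a b := by
    simp only [dotProduct, mulVec, diffKernelMatrix_tuplePoints_apply hcol hrow, S, sum_filter,
      mul_sum, ite_and, mul_ite, ite_mul, mul_zero, zero_mul, sum_ite_irrel, sum_const_zero]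
    refine sum_congr rfl fun a _ => ?_
    split_ifs
    · refine sum_congr rfl fun b _ => ?_
      split_ifs
      · simp only [dhsicWeight, v, R, Pi.sub_apply]
        ring
      · rfl
    · rfl
  have hT : ∑ a ∈ S, ∑ b ∈ S, (jointWeight d n a - v a) * (jointWeight d n b - v b) * R a b ≤
      Kr * (((n : ℝ)⁻¹) ^ 2 + ((n : ℝ)⁻¹) ^ 2) := by
    have h := sum_sum_sub_mul_sub_mul_le S (u := jointWeight d n) (v := v) (R := R) (M := Kr)
      (fun a _ => sum_nonneg fun i _ => by split_ifs <;> positivity)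
      (fun a _ => by simp only [v, Function.const_apply]; positivity)
      fun a _ b _ => ⟨prod_nonneg fun j _ => (hbdd j _ _).1,
        prod_le_prod (fun j _ => (hbdd j _ _).1) fun j _ => (hbdd j _ _).2⟩
    simp only [S, v, Function.const_apply, sum_filter_jointWeight, sum_filter_inv_pow] at h
    exact h
  calc _ = Δ * _ := hquad
    _ ≤ Δ * (Kr * (((n : ℝ)⁻¹) ^ 2 + ((n : ℝ)⁻¹) ^ 2)) :=
        mul_le_mul_of_nonneg_left hT ((hpsd j₀).kernelDistSq_nonneg _ _)
    _ ≤ 2 * K j₀ * (Kr * (((n : ℝ)⁻¹) ^ 2 + ((n : ℝ)⁻¹) ^ 2)) :=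
        mul_le_mul_of_nonneg_right (kernelDistSq_le (hbdd j₀) _ _)
          (mul_nonneg (prod_nonneg fun j _ => hK j) (by positivity))
    _ = (2 / n) ^ 2 * ∏ j, K j := by
        rw [← mul_prod_erase univ K (mem_univ j₀)]
        ring

theorem abs_dHSICemp_sub_le_of_single_column {K : Fin d → ℝ}
    (hpsd : ∀ j, IsSymmPSDKernel (k j)) (hbdd : ∀ j, ∀ x y : X j, 0 ≤ k j x y ∧ k j x y ≤ K j)
    {j₀ : Fin d} {Z Z' : Fin n → ∀ j, X j} (hcol : ∀ i, ∀ j ≠ j₀, Z i j = Z' i j)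
    (hrow : {i | Z i j₀ ≠ Z' i j₀}.Subsingleton) :
    |dHSICemp k Z - dHSICemp k Z'| ≤ 2 / n * √(∏ j, K j) := by
  rcases hrow.eq_empty_or_singleton with hempty | ⟨i₀, hi₀⟩
  · have hZ : Z = Z' := by
      funext i j
      by_cases hj : j = j₀
      · subst hj
        by_contra hne
        exact hempty.subset hne
      · exact hcol i j hj
    rw [hZ, sub_self, abs_zero]
    positivity
  · have hrow' (i : Fin n) (hi : i ≠ i₀) : Z i j₀ = Z' i j₀ := by
      by_contra hne
      exact hi (hi₀.subset hne)
    have hK : 0 ≤ ∏ j, K j :=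
      prod_nonneg fun j _ => (hbdd j _ _).1.trans (hbdd j (Z i₀ j) (Z i₀ j)).2
    rw [dHSICemp, dHSICemp, Vstat_eq_dhsicWeight_dotProduct fun j => (hpsd j).1,
      Vstat_eq_dhsicWeight_dotProduct fun j => (hpsd j).1]
    refine (abs_sqrt_prodKernelMatrix_sub_le hpsd _ _ _).trans ?_
    rw [Real.sqrt_le_left (by positivity), mul_pow, Real.sq_sqrt hK]
    exact dhsicWeight_dotProduct_diffKernelMatrix_le hpsd hbdd hcol hrow'

theorem abs_dHSICemp_sub_le_of_subsingleton {K : Fin d → ℝ}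
    (hpsd : ∀ j, IsSymmPSDKernel (k j)) (hbdd : ∀ j, ∀ x y : X j, 0 ≤ k j x y ∧ k j x y ≤ K j)
    {Z Z' : Fin n → ∀ j, X j} (hrow : ∀ j, {i | Z i j ≠ Z' i j}.Subsingleton) :
    |dHSICemp k Z - dHSICemp k Z'| ≤ 2 * d / n * √(∏ j, K j) := by
  classical
  let mix (s : Finset (Fin d)) : Fin n → ∀ j, X j := fun i j => if j ∈ s then Z' i j else Z i j
  have hmix (s : Finset (Fin d)) :
      |dHSICemp k Z - dHSICemp k (mix s)| ≤ 2 * #s / n * √(∏ j, K j) := by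
    induction s using Finset.induction_on with
    | empty =>
      simp only [mix, notMem_empty, if_false, sub_self, abs_zero]
      positivity
    | insert j s hj ih =>
      have hstep : |dHSICemp k (mix s) - dHSICemp k (mix (insert j s))| ≤
          2 / n * √(∏ j, K j) := by
        refine abs_dHSICemp_sub_le_of_single_column hpsd hbdd (j₀ := j) (fun i j' hj' => ?_)
          ((hrow j).anti fun i hi => by simpa [mix, hj] using hi)
        simp [mix, hj']
      calc |dHSICemp k Z - dHSICemp k (mix (insert j s))|
          ≤ |dHSICemp k Z - dHSICemp k (mix s)| +
              |dHSICemp k (mix s) - dHSICemp k (mix (insert j s))| := abs_sub_le _ _ _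
        _ ≤ 2 * #s / n * √(∏ j, K j) + 2 / n * √(∏ j, K j) := add_le_add ih hstep
        _ = 2 * #(insert j s) / n * √(∏ j, K j) := by
          rw [card_insert_of_notMem hj]
          push_cast
          ring
  simpa [mix] using hmix univ

end Vstat

theorem sensitivity_empirical_permutation_dHSIC_general
    {d n : ℕ}
    (X : Fin d → Type*) (k : ∀ j, X j → X j → ℝ) (K : Fin d → ℝ)
    (hpsd : ∀ j, IsSymmPSDKernel (k j))
    (hbdd : ∀ j, ∀ x y : X j, 0 ≤ k j x y ∧ k j x y ≤ K j)
    (π : Fin d → Equiv.Perm (Fin n))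
    (D D' : Fin n → ∀ j, X j) (hham : hamD D D' ≤ 1) :
    |dHSICemp k (permuteD π D) - dHSICemp k (permuteD π D')|
      ≤ 2 * (d : ℝ) / (n : ℝ) * Real.sqrt (∏ j, K j) := by
  have hdiff : {i | D i ≠ D' i}.Subsingleton := Set.ncard_le_one_iff_subsingleton.1 hham
  refine abs_dHSICemp_sub_le_of_subsingleton hpsd hbdd fun j =>
    (hdiff.preimage (π j).injective).anti fun i hi => ?_
  exact fun h => hi (congrFun h j)

/-- sensitivity of the empirical permutation dHSIC. -/
theorem sensitivity_empirical_permutation_dHSIC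
    {d n : ℕ} (hd : 2 ≤ d) (hn : 1 ≤ n)
    (X : Fin d → Type*) (k : ∀ j, X j → X j → ℝ) (K : Fin d → ℝ)
    (hpsd : ∀ j, IsSymmPSDKernel (k j))
    (hbdd : ∀ j, ∀ x y : X j, 0 ≤ k j x y ∧ k j x y ≤ K j)
    (π : Fin d → Equiv.Perm (Fin n))
    (D D' : Fin n → ∀ j, X j) (hham : hamD D D' ≤ 1) :
    |dHSICemp k (permuteD π D) - dHSICemp k (permuteD π D')|
      ≤ 2 * (d : ℝ) / (n : ℝ) * Real.sqrt (∏ j, K j) :=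
  sensitivity_empirical_permutation_dHSIC_general X k K hpsd hbdd π D D' hham

end
end

section
/- Let d = 2, let X^1 and X^2 be additive groups, and for j ∈ {1,2} let k^j : X^j × X^j → ℝ be a symmetric positive semidefinite kernel that is translation invariant, i.e. k^j(x,y) = κ^j(x−y) for some function κ^j, with 0 ≤ k^j(x,y) ≤ K^j := κ^j(0) for all x,y, and that has non-empty level sets, i.e. for every ε ∈ (0, K^j) there exist x,y ∈ X^j with k^j(x,y) ≤ ε. Then for every n ≥ 3, the supremum over all pairs π = (π^1,π^2) of permutations of {1,…,n} and over all datasets X, X̃ of size n with d_ham(X, X̃) ≤ 1 of |dHSIC^(X^π) − dHSIC^(X̃^π)| is at least 4(n − 2.5)·n^{-2}·(K^1 K^2)^{1/2}. -/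
open Finset

noncomputable section

/-!
For `d = 2` the squared dHSIC of a dataset with Gram matrices `A`, `B` is the bilinear form
`hsicOfGram A B = n⁻² ⟨HAH, B⟩` (`H` the centring matrix); paired with a symmetric matrix it
vanishes on every `A a b = f a + f b`. Choose `u_j, v_j` with `e_j = k_j(u_j, v_j) ≤ ε` and put
`u_j` on a set `S_j` of indices and `v_j` elsewhere. The Gram matrices are then
`K_j - (K_j - e_j)(x_a - x_b)²` with `x` the indicator of `S_j`, so the squared dHSIC is
`(2 (n |S₀ ∩ S₁| - |S₀| |S₁|) / n²)² (K₀ - e₀)(K₁ - e₁)`.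
Start with `u` at index `1` only, change index `0` to `u` as well, and swap indices `0` and `1` in
the first coordinate: `(S₀, S₁)` goes from `({0}, {1})` to `({0, 1}, {0, 1})`, so
`n |S₀ ∩ S₁| - |S₀| |S₁|` goes from `-1` to `2n - 4` and the dHSIC moves by
`4 (n - 2.5) / n² · √((K₀ - e₀)(K₁ - e₁))`. Letting `ε → 0` gives the bound.
-/

open Filter Topology

section

variable {n : ℕ}

def hsicOfGram (A B : Fin n → Fin n → ℝ) : ℝ :=
  ((n : ℝ) ^ 2)⁻¹ * ∑ a, ∑ b, A a b * B a b
    + ((n : ℝ) ^ 4)⁻¹ * ((∑ a, ∑ b, A a b) * ∑ a, ∑ b, B a b)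
    - 2 * ((n : ℝ) ^ 3)⁻¹ * ∑ a, (∑ b, A a b) * ∑ b, B a b

lemma hsicOfGram_comm (A B : Fin n → Fin n → ℝ) : hsicOfGram A B = hsicOfGram B A := by
  simp only [hsicOfGram, mul_comm (A _ _), mul_comm (∑ b, A _ b), mul_comm (∑ a, ∑ b, A a b)]

lemma hsicOfGram_add_left (A A' B : Fin n → Fin n → ℝ) :
    hsicOfGram (A + A') B = hsicOfGram A B + hsicOfGram A' B := by
  simp only [hsicOfGram, Pi.add_apply, add_mul, sum_add_distrib]
  ring

lemma hsicOfGram_smul_left (c : ℝ) (A B : Fin n → Fin n → ℝ) :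
    hsicOfGram (c • A) B = c * hsicOfGram A B := by
  simp only [hsicOfGram, Pi.smul_apply, smul_eq_mul, mul_assoc, ← mul_sum]
  ring

lemma hsicOfGram_add_apply_eq_zero (hn : n ≠ 0) (f : Fin n → ℝ) {B : Fin n → Fin n → ℝ}
    (hB : ∀ a b, B a b = B b a) : hsicOfGram (fun a b => f a + f b) B = 0 := by
  have hcross : ∑ a, ∑ b, (f a + f b) * B a b = 2 * ∑ a, f a * ∑ b, B a b := by
    simp only [add_mul, sum_add_distrib, mul_sum]
    rw [sum_comm (f := fun a b => f b * B a b)]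
    simp only [hB _ _, ← two_mul, mul_sum]
  have hrow : ∀ a, ∑ b, (f a + f b) = n * f a + ∑ b, f b := by
    intro a; simp [sum_add_distrib]
  have hmixed : ∑ a, (n * f a + ∑ b, f b) * ∑ b, B a b
      = n * ∑ a, f a * ∑ b, B a b + (∑ b, f b) * ∑ a, ∑ b, B a b := by
    simp only [add_mul, sum_add_distrib, mul_sum, mul_assoc]
  simp only [hsicOfGram, hcross, hrow, hmixed, sum_add_distrib, ← mul_sum,
    sum_const, card_univ, Fintype.card_fin, nsmul_eq_mul]
  field_simp
  ring

lemma hsicOfGram_mul_apply (hn : n ≠ 0) (x y : Fin n → ℝ) :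
    hsicOfGram (fun a b => x a * x b) (fun a b => y a * y b)
      = ((n * ∑ a, x a * y a - (∑ a, x a) * ∑ a, y a) / n ^ 2) ^ 2 := by
  have hxy : ∑ a, ∑ b, x a * x b * (y a * y b) = (∑ a, x a * y a) ^ 2 := by
    simp only [sq, sum_mul_sum]; congr! 2; ring
  simp only [hsicOfGram, hxy, ← mul_sum]
  simp only [mul_mul_mul_comm (x _), ← sum_mul]
  field_simp
  ring

lemma hsicOfGram_sub_mul_sq (hn : n ≠ 0) (α β γ δ : ℝ) (x y : Fin n → ℝ) :
    hsicOfGram (fun a b => α - β * (x a - x b) ^ 2) (fun a b => γ - δ * (y a - y b) ^ 2)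
      = 4 * (β * δ) * ((n * ∑ a, x a * y a - (∑ a, x a) * ∑ a, y a) / n ^ 2) ^ 2 := by
  have hsplit : ∀ (α β : ℝ) (x : Fin n → ℝ), (fun a b => α - β * (x a - x b) ^ 2)
      = (fun a b => (α / 2 - β * x a ^ 2) + (α / 2 - β * x b ^ 2))
        + (2 * β) • fun a b => x a * x b := by
    intro α β x; ext a b; simp only [Pi.add_apply, Pi.smul_apply, smul_eq_mul]; ring
  have hsymm : ∀ (α β : ℝ) (x : Fin n → ℝ) (a b : Fin n),
      α - β * (x a - x b) ^ 2 = α - β * (x b - x a) ^ 2 := by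
    intro α β x a b; ring
  rw [hsplit α β x, hsicOfGram_add_left, hsicOfGram_add_apply_eq_zero hn _ (hsymm γ δ y),
    hsicOfGram_smul_left, hsicOfGram_comm, hsplit γ δ y, hsicOfGram_add_left,
    hsicOfGram_add_apply_eq_zero hn _ (fun a b => mul_comm (x a) (x b)), hsicOfGram_smul_left,
    hsicOfGram_comm, hsicOfGram_mul_apply hn]
  ring

lemma hsicOfGram_le (hn : n ≠ 0) {A B : Fin n → Fin n → ℝ} {α β : ℝ}
    (hA : ∀ a b, 0 ≤ A a b ∧ A a b ≤ α) (hB : ∀ a b, 0 ≤ B a b ∧ B a b ≤ β) :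
    hsicOfGram A B ≤ 2 * (α * β) := by
  have hn' : (0 : ℝ) < n := by positivity
  obtain ⟨i⟩ : Nonempty (Fin n) := ⟨⟨0, Nat.pos_of_ne_zero hn⟩⟩
  have hα : 0 ≤ α := (hA i i).1.trans (hA i i).2
  have hsum : ∀ (M : Fin n → Fin n → ℝ) (c : ℝ), (∀ a b, M a b ≤ c) →
      ∑ a, ∑ b, M a b ≤ n ^ 2 * c := fun M c h =>
    (sum_le_sum fun a _ => sum_le_sum fun b _ => h a b).trans_eq (by simp; ring)
  have hAB := hsum (fun a b => A a b * B a b) (α * β)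
    fun a b => mul_le_mul (hA a b).2 (hB a b).2 (hB a b).1 hα
  have hAtB : (∑ a, ∑ b, A a b) * ∑ a, ∑ b, B a b ≤ n ^ 2 * α * (n ^ 2 * β) :=
    mul_le_mul (hsum A α fun a b => (hA a b).2) (hsum B β fun a b => (hB a b).2)
      (sum_nonneg fun a _ => sum_nonneg fun b _ => (hB a b).1) (by positivity)
  have hrows : 0 ≤ ∑ a, (∑ b, A a b) * ∑ b, B a b := sum_nonneg fun a _ =>
    mul_nonneg (sum_nonneg fun b _ => (hA a b).1) (sum_nonneg fun b _ => (hB a b).1)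
  have h₁ : ((n : ℝ) ^ 2)⁻¹ * ∑ a, ∑ b, A a b * B a b ≤ α * β :=
    (inv_mul_le_iff₀ (by positivity)).2 hAB
  have h₂ : ((n : ℝ) ^ 4)⁻¹ * ((∑ a, ∑ b, A a b) * ∑ a, ∑ b, B a b) ≤ α * β :=
    (inv_mul_le_iff₀ (by positivity)).2 (hAtB.trans_eq (by ring))
  have h₃ : 0 ≤ 2 * ((n : ℝ) ^ 3)⁻¹ * ∑ a, (∑ b, A a b) * ∑ b, B a b :=
    mul_nonneg (by positivity) hrows
  rw [hsicOfGram]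
  linarith

lemma Vstat_eq_hsicOfGram {X : Fin 2 → Type*} (k : ∀ j, X j → X j → ℝ)
    (D : Fin n → ∀ j, X j) :
    Vstat k D = hsicOfGram (fun a b => k 0 (D a 0) (D b 0)) (fun a b => k 1 (D a 1) (D b 1)) := by
  have hpair : ∑ a : Fin 2 → Fin n, ∑ b : Fin 2 → Fin n, ∏ j, k j (D (a j) j) (D (b j) j)
      = ∏ j, ∑ a, ∑ b, k j (D a j) (D b j) := by
    rw [Fintype.prod_sum]
    exact sum_congr rfl fun a _ => (Fintype.prod_sum fun j b => k j (D (a j) j) (D b j)).symm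
  have hrow : ∀ a, ∑ c : Fin 2 → Fin n, ∏ j, k j (D a j) (D (c j) j)
      = ∏ j, ∑ b, k j (D a j) (D b j) :=
    fun a => (Fintype.prod_sum fun j b => k j (D a j) (D b j)).symm
  rw [Vstat, hpair, sum_congr rfl fun a _ => hrow a]
  simp only [hsicOfGram, Fin.prod_univ_two]

lemma dHSICemp_le (hn : n ≠ 0) {X : Fin 2 → Type*} {k : ∀ j, X j → X j → ℝ} {K : Fin 2 → ℝ}
    (hbdd : ∀ j x y, 0 ≤ k j x y ∧ k j x y ≤ K j) (D : Fin n → ∀ j, X j) :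
    dHSICemp k D ≤ √(2 * (K 0 * K 1)) :=
  Real.sqrt_le_sqrt <| (Vstat_eq_hsicOfGram k D).trans_le <|
    hsicOfGram_le hn (fun _ _ => hbdd 0 _ _) (fun _ _ => hbdd 1 _ _)

def twoPoint {d : ℕ} {X : Fin d → Type*} (u v : ∀ j, X j) (S : Fin d → Finset (Fin n)) :
    Fin n → ∀ j, X j :=
  fun i j => if i ∈ S j then u j else v j

lemma permuteD_twoPoint {d : ℕ} {X : Fin d → Type*} (π : Fin d → Equiv.Perm (Fin n))
    (u v : ∀ j, X j) (S : Fin d → Finset (Fin n)) :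
    permuteD π (twoPoint u v S) = twoPoint u v fun j => (S j).map (π j).symm.toEmbedding := by
  ext i j
  simp [permuteD, twoPoint, mem_map_equiv]

lemma hamD_le_one_of_eq_of_ne {d : ℕ} {X : Fin d → Type*} {D D' : Fin n → ∀ j, X j} (i₀ : Fin n)
    (h : ∀ i, i ≠ i₀ → D i = D' i) : hamD D D' ≤ 1 := by
  calc hamD D D' ≤ ({i₀} : Set (Fin n)).ncard :=
        Set.ncard_le_ncard (fun i hi => by_contra fun hne => hi (h i hne)) (Set.finite_singleton i₀)
    _ = 1 := Set.ncard_singleton i₀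

lemma apply_ite_mem_ite_mem {Y : Type*} {k : Y → Y → ℝ} {u v : Y} {K e : ℝ}
    (hu : k u u = K) (hv : k v v = K) (huv : k u v = e) (hvu : k v u = e)
    (s : Finset (Fin n)) (a b : Fin n) :
    k (if a ∈ s then u else v) (if b ∈ s then u else v)
      = K - (K - e) * ((if a ∈ s then 1 else 0) - (if b ∈ s then 1 else 0)) ^ 2 := by
  split_ifs <;> simp only [hu, hv, huv, hvu] <;> ring

lemma Vstat_twoPoint (hn : n ≠ 0) {X : Fin 2 → Type*} {k : ∀ j, X j → X j → ℝ} {K : Fin 2 → ℝ}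
    (hdiag : ∀ j x, k j x x = K j) (hsymm : ∀ j x y, k j x y = k j y x)
    (u v : ∀ j, X j) (S : Fin 2 → Finset (Fin n)) :
    Vstat k (twoPoint u v S)
      = (2 * (n * #(S 0 ∩ S 1) - #(S 0) * #(S 1)) / n ^ 2) ^ 2
          * ((K 0 - k 0 (u 0) (v 0)) * (K 1 - k 1 (u 1) (v 1))) := by
  have hgram : ∀ j a b, k j (twoPoint u v S a j) (twoPoint u v S b j)
      = K j - (K j - k j (u j) (v j))
          * ((if a ∈ S j then 1 else 0) - (if b ∈ S j then 1 else 0)) ^ 2 :=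
    fun j => apply_ite_mem_ite_mem (hdiag j _) (hdiag j _) rfl (hsymm j _ _) (S j)
  simp only [Vstat_eq_hsicOfGram, hgram, hsicOfGram_sub_mul_sq hn, ite_zero_mul_ite_zero, one_mul,
    ← mem_inter, sum_boole, filter_mem_eq_inter, univ_inter]
  ring

lemma dHSICemp_twoPoint (hn : n ≠ 0) {X : Fin 2 → Type*} {k : ∀ j, X j → X j → ℝ}
    {K : Fin 2 → ℝ} (hdiag : ∀ j x, k j x x = K j) (hsymm : ∀ j x y, k j x y = k j y x)
    (u v : ∀ j, X j) (S : Fin 2 → Finset (Fin n)) :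
    dHSICemp k (twoPoint u v S)
      = |2 * ((n : ℝ) * #(S 0 ∩ S 1) - #(S 0) * #(S 1)) / n ^ 2|
          * √((K 0 - k 0 (u 0) (v 0)) * (K 1 - k 1 (u 1) (v 1))) := by
  rw [dHSICemp, Vstat_twoPoint hn hdiag hsymm, Real.sqrt_mul (sq_nonneg _), Real.sqrt_sq_eq_abs]

lemma exists_hamD_le_one_dHSICemp_permuteD_gap (hn : 3 ≤ n) {X : Fin 2 → Type*}
    {k : ∀ j, X j → X j → ℝ} {K : Fin 2 → ℝ} (hdiag : ∀ j x, k j x x = K j)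
    (hsymm : ∀ j x y, k j x y = k j y x) (u v : ∀ j, X j) :
    ∃ (π : Fin 2 → Equiv.Perm (Fin n)) (D D' : Fin n → ∀ j, X j), hamD D D' ≤ 1 ∧
      |dHSICemp k (permuteD π D) - dHSICemp k (permuteD π D')|
        = 4 * ((n : ℝ) - 2.5) / n ^ 2 * √((K 0 - k 0 (u 0) (v 0)) * (K 1 - k 1 (u 1) (v 1))) := by
  set z₀ : Fin n := ⟨0, by omega⟩
  set z₁ : Fin n := ⟨1, by omega⟩
  have hz : z₀ ≠ z₁ := by simp [z₀, z₁, Fin.ext_iff]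
  set π : Fin 2 → Equiv.Perm (Fin n) := ![Equiv.swap z₀ z₁, Equiv.refl _]
  have hD : permuteD π (twoPoint u v fun _ => {z₁}) = twoPoint u v ![{z₀}, {z₁}] := by
    rw [permuteD_twoPoint]
    congr with j : 1
    fin_cases j <;> simp [π]
  have hD' : permuteD π (twoPoint u v fun _ => {z₀, z₁}) = twoPoint u v fun _ => {z₀, z₁} := by
    rw [permuteD_twoPoint]
    congr with j : 1
    fin_cases j <;> simp [π, pair_comm]
  refine ⟨π, twoPoint u v fun _ => {z₁}, twoPoint u v fun _ => {z₀, z₁},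
    hamD_le_one_of_eq_of_ne z₀ fun i hi => ?_, ?_⟩
  · ext j; simp [twoPoint, hi]
  have hn' : (3 : ℝ) ≤ n := by exact_mod_cast hn
  rw [hD, hD', dHSICemp_twoPoint (by omega) hdiag hsymm, dHSICemp_twoPoint (by omega) hdiag hsymm,
    ← sub_mul, abs_mul, abs_of_nonneg (Real.sqrt_nonneg _)]
  congr 1
  simp only [Matrix.cons_val_zero, Matrix.cons_val_one, inter_self, card_pair hz, card_singleton,
    singleton_inter_of_notMem (mem_singleton.not.2 hz), card_empty, Nat.cast_zero, Nat.cast_one,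
    Nat.cast_ofNat]
  have hsmall : |2 * ((n : ℝ) * 0 - 1 * 1) / n ^ 2| = 2 / (n : ℝ) ^ 2 := by
    rw [abs_div, abs_of_pos (by positivity : (0 : ℝ) < n ^ 2)]
    norm_num
  have hlarge : |2 * ((n : ℝ) * 2 - 2 * 2) / n ^ 2| = 2 * ((n : ℝ) * 2 - 2 * 2) / n ^ 2 :=
    abs_of_nonneg (div_nonneg (by linarith) (by positivity))
  rw [hsmall, hlarge, abs_sub_comm,
    abs_of_nonneg (by rw [← sub_div]; exact div_nonneg (by linarith) (by positivity))]
  ring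

lemma exists_apply_le_of_forall_lt {Y : Type*} [Nonempty Y] {k : Y → Y → ℝ} {K : ℝ}
    (hle : ∀ x y, k x y ≤ K) (hlevel : ∀ ε, 0 < ε → ε < K → ∃ x y, k x y ≤ ε) {ε : ℝ}
    (hε : 0 < ε) : ∃ x y, k x y ≤ ε := by
  rcases lt_or_ge ε K with hεK | hKε
  · exact hlevel ε hε hεK
  · obtain ⟨y⟩ := ‹Nonempty Y›
    exact ⟨y, y, (hle y y).trans hKε⟩

lemma le_csSup_of_tendsto_nhdsGT_zero {S : Set ℝ} (hS : BddAbove S) {f : ℝ → ℝ} {L : ℝ}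
    (hf : Tendsto f (𝓝[>] 0) (𝓝 L)) (h : ∀ ε, 0 < ε → ∃ s ∈ S, f ε ≤ s) : L ≤ sSup S :=
  le_of_tendsto hf <| eventually_nhdsWithin_of_forall fun ε hε =>
    let ⟨_, hs, hfs⟩ := h ε hε
    hfs.trans (le_csSup hS hs)

end

/-- lower bound for the sensitivity of the permutation dHSIC
for `d = 2`, translation invariant kernels with non-empty level sets. -/
theorem permutation_dHSIC_sensitivity_lower_bound
    {n : ℕ} (hn : 3 ≤ n)
    (X : Fin 2 → Type*) [∀ j, AddGroup (X j)]
    (κ : ∀ j, X j → ℝ) (k : ∀ j, X j → X j → ℝ) (K : Fin 2 → ℝ)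
    (htrans : ∀ j, ∀ x y : X j, k j x y = κ j (x - y))
    (hKdef : ∀ j, K j = κ j 0)
    (hpsd : ∀ j, IsSymmPSDKernel (k j))
    (hbdd : ∀ j, ∀ x y : X j, 0 ≤ k j x y ∧ k j x y ≤ K j)
    (hlevel : ∀ j, ∀ ε : ℝ, 0 < ε → ε < K j → ∃ x y : X j, k j x y ≤ ε) :
    4 * ((n : ℝ) - 2.5) / (n : ℝ) ^ 2 * Real.sqrt (K 0 * K 1)
      ≤ sSup {v : ℝ |
          ∃ (π : Fin 2 → Equiv.Perm (Fin n)) (D D' : Fin n → ∀ j, X j),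
            hamD D D' ≤ 1 ∧
            v = |dHSICemp k (permuteD π D) - dHSICemp k (permuteD π D')|} := by
  have hdiag : ∀ j x, k j x x = K j := fun j x => by rw [htrans, sub_self, hKdef]
  have hK : ∀ j, 0 ≤ K j := fun j => (hbdd j 0 0).1.trans (hbdd j 0 0).2
  have hC : 0 ≤ 4 * ((n : ℝ) - 2.5) / (n : ℝ) ^ 2 := by
    have : (3 : ℝ) ≤ n := by exact_mod_cast hn
    norm_num
    exact div_nonneg (by linarith) (by positivity)
  refine le_csSup_of_tendsto_nhdsGT_zero
    (f := fun ε => 4 * ((n : ℝ) - 2.5) / n ^ 2 * √(max (K 0 - ε) 0 * max (K 1 - ε) 0))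
    ⟨√(2 * (K 0 * K 1)), ?_⟩ ?_ fun ε hε => ?_
  · rintro _ ⟨π, D, D', -, rfl⟩
    exact abs_sub_le_of_nonneg_of_le (Real.sqrt_nonneg _) (dHSICemp_le (by omega) hbdd _)
      (Real.sqrt_nonneg _) (dHSICemp_le (by omega) hbdd _)
  · have hcont : Continuous fun ε => 4 * ((n : ℝ) - 2.5) / n ^ 2
        * √(max (K 0 - ε) 0 * max (K 1 - ε) 0) := by fun_prop
    simpa [hK] using (hcont.tendsto 0).mono_left nhdsWithin_le_nhds
  choose u v huv using fun j =>
    exists_apply_le_of_forall_lt (fun x y => (hbdd j x y).2) (hlevel j) hε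
  obtain ⟨π, D, D', hham, hgap⟩ :=
    exists_hamD_le_one_dHSICemp_permuteD_gap hn hdiag (fun j => (hpsd j).1) u v
  refine ⟨_, ⟨π, D, D', hham, rfl⟩, hgap.ge.trans' ?_⟩
  have hmax : ∀ j, max (K j - ε) 0 ≤ K j - k j (u j) (v j) := fun j =>
    max_le (by linarith [huv j]) (sub_nonneg.2 (hbdd j _ _).2)
  exact mul_le_mul_of_nonneg_left (Real.sqrt_le_sqrt <| mul_le_mul (hmax 0) (hmax 1)
    (le_max_right _ _) ((le_max_right _ _).trans (hmax 0))) hC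

end
end

section
/- Let d = 2, let X^1 and X^2 be additive groups, and for j ∈ {1,2} let k^j : X^j × X^j → ℝ be a symmetric positive semidefinite kernel that is translation invariant, i.e. k^j(x,y) = κ^j(x−y), with 0 ≤ k^j(x,y) ≤ K^j := κ^j(0) for all x,y, and that has non-empty level sets, i.e. for every ε ∈ (0, K^j) there exist x,y ∈ X^j with k^j(x,y) ≤ ε. Then for every n divisible by 4, the supremum over all bootstrap resamples b = (b^1, b^2) with arbitrary maps b^j : {1,…,n} → {1,…,n} and over all datasets X, X̃ of size n with d_ham(X, X̃) ≤ 1 of |dHSIC^(X^b) − dHSIC^(X̃^b)| is at least (3/8)·(K^1 K^2)^{1/2}. -/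
open Finset

noncomputable section

/-- Dataset resampled by a `d`-tuple of arbitrary maps (bootstrap resample). -/
def bootD {d n : ℕ} {X : Fin d → Type*} (b : Fin d → (Fin n → Fin n))
    (D : Fin n → ∀ j, X j) : Fin n → ∀ j, X j :=
  fun i j => D (b j i) j

lemma sum_pi_prod {d n : ℕ} (F : Fin d → Fin n → ℝ) :
    ∑ a : Fin d → Fin n, ∏ j, F j (a j) = ∏ j, ∑ i, F j i := by
  rw [Finset.prod_univ_sum, Fintype.piFinset_univ]

lemma sum_if_half {n h : ℕ} (hn2 : n = 2 * h) (u v : ℝ) :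
    ∑ i : Fin n, (if (i : ℕ) < h then u else v) = h * u + h * v := by
  subst hn2
  rw [Fin.sum_univ_eq_sum_range (fun i => if i < h then u else v)]
  rw [Finset.range_eq_Ico,
    ← Finset.sum_Ico_consecutive (fun i => if i < h then u else v)
      (Nat.zero_le h) (by omega : h ≤ 2 * h)]
  have h1 : ∑ i ∈ Finset.Ico 0 h, (if i < h then u else v) = h * u := by
    rw [Finset.sum_congr rfl (fun i hi => if_pos (Finset.mem_Ico.1 hi).2),
      Finset.sum_const, Nat.card_Ico, nsmul_eq_mul, Nat.sub_zero]
  have h2 : ∑ i ∈ Finset.Ico h (2 * h), (if i < h then u else v) = h * v := by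
    rw [Finset.sum_congr rfl (fun i hi => if_neg (by have := (Finset.mem_Ico.1 hi).1; omega)),
      Finset.sum_const, Nat.card_Ico, nsmul_eq_mul]
    congr 1
    have : 2 * h - h = h := by omega
    rw [this]
  rw [h1, h2]

lemma Vstat_two_block {n h : ℕ} (hn2 : n = 2 * h) (hh : 0 < h)
    {X : Fin 2 → Type*} (k : ∀ j, X j → X j → ℝ) (x y : ∀ j, X j)
    (K e : Fin 2 → ℝ)
    (hxx : ∀ j, k j (x j) (x j) = K j) (hyy : ∀ j, k j (y j) (y j) = K j)
    (hxy : ∀ j, k j (x j) (y j) = e j) (hyx : ∀ j, k j (y j) (x j) = e j) :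
    Vstat k (fun (i : Fin n) (j : Fin 2) => if (i : ℕ) < h then x j else y j)
      = (K 0 - e 0) * (K 1 - e 1) / 4 := by
  set Z : Fin n → ∀ j, X j := fun i j => if (i : ℕ) < h then x j else y j with hZdef
  have hk : ∀ (j : Fin 2) (i1 i2 : Fin n), k j (Z i1 j) (Z i2 j)
      = if (i1 : ℕ) < h then (if (i2 : ℕ) < h then K j else e j)
        else (if (i2 : ℕ) < h then e j else K j) := by
    intro j i1 i2
    by_cases h1 : (i1 : ℕ) < h <;> by_cases h2 : (i2 : ℕ) < h <;>
      simp [hZdef, h1, h2, hxx, hyy, hxy, hyx]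
  have row : ∀ (j : Fin 2) (i1 : Fin n),
      ∑ i2 : Fin n, k j (Z i1 j) (Z i2 j) = h * K j + h * e j := by
    intro j i1
    by_cases h1 : (i1 : ℕ) < h
    · simp only [hk, if_pos h1]; rw [sum_if_half hn2]
    · simp only [hk, if_neg h1]; rw [sum_if_half hn2]; ring
  have Ssum : ∀ j : Fin 2, ∑ i1 : Fin n, ∑ i2 : Fin n, k j (Z i1 j) (Z i2 j)
      = n * (h * K j + h * e j) := by
    intro j
    rw [Finset.sum_congr rfl fun i1 _ => row j i1, Finset.sum_const, Finset.card_univ,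
      Fintype.card_fin, nsmul_eq_mul]
  have T1 : ∑ i1 : Fin n, ∑ i2 : Fin n, ∏ j : Fin 2, k j (Z i1 j) (Z i2 j)
      = 2 * (h:ℝ)^2 * (K 0 * K 1) + 2 * (h:ℝ)^2 * (e 0 * e 1) := by
    have hp : ∀ i1 i2 : Fin n, ∏ j : Fin 2, k j (Z i1 j) (Z i2 j)
        = if (i1 : ℕ) < h then (if (i2 : ℕ) < h then K 0 * K 1 else e 0 * e 1)
          else (if (i2 : ℕ) < h then e 0 * e 1 else K 0 * K 1) := by
      intro i1 i2
      rw [Fin.prod_univ_two, hk, hk]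
      by_cases h1 : (i1 : ℕ) < h <;> by_cases h2 : (i2 : ℕ) < h <;> simp [h1, h2]
    have inner : ∀ i1 : Fin n, ∑ i2 : Fin n, ∏ j : Fin 2, k j (Z i1 j) (Z i2 j)
        = if (i1 : ℕ) < h then (h:ℝ) * (K 0 * K 1) + h * (e 0 * e 1)
          else (h:ℝ) * (e 0 * e 1) + h * (K 0 * K 1) := by
      intro i1
      rw [Finset.sum_congr rfl fun i2 _ => hp i1 i2]
      by_cases h1 : (i1 : ℕ) < h
      · simp only [if_pos h1]; exact sum_if_half hn2 _ _
      · simp only [if_neg h1]; exact sum_if_half hn2 _ _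
    rw [Finset.sum_congr rfl fun i1 _ => inner i1, sum_if_half hn2]
    ring
  have T2 : ∑ a : Fin 2 → Fin n, ∑ b : Fin 2 → Fin n, ∏ j : Fin 2, k j (Z (a j) j) (Z (b j) j)
      = ((n:ℝ) * ((h:ℝ) * K 0 + h * e 0)) * ((n:ℝ) * ((h:ℝ) * K 1 + h * e 1)) := by
    have step1 : ∀ a : Fin 2 → Fin n, ∑ b : Fin 2 → Fin n, ∏ j : Fin 2, k j (Z (a j) j) (Z (b j) j)
        = ∏ j : Fin 2, ∑ i2 : Fin n, k j (Z (a j) j) (Z i2 j) :=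
      fun a => sum_pi_prod fun j i2 => k j (Z (a j) j) (Z i2 j)
    rw [Finset.sum_congr rfl fun a _ => step1 a,
      sum_pi_prod fun j i1 => ∑ i2 : Fin n, k j (Z i1 j) (Z i2 j)]
    rw [Fin.prod_univ_two, Ssum 0, Ssum 1]
  have T3 : ∑ i1 : Fin n, ∑ c : Fin 2 → Fin n, ∏ j : Fin 2, k j (Z i1 j) (Z (c j) j)
      = (n:ℝ) * (((h:ℝ) * K 0 + h * e 0) * ((h:ℝ) * K 1 + h * e 1)) := by
    have step1 : ∀ i1 : Fin n, ∑ c : Fin 2 → Fin n, ∏ j : Fin 2, k j (Z i1 j) (Z (c j) j)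
        = ((h:ℝ) * K 0 + h * e 0) * ((h:ℝ) * K 1 + h * e 1) := by
      intro i1
      rw [sum_pi_prod fun j i2 => k j (Z i1 j) (Z i2 j), Fin.prod_univ_two, row, row]
    rw [Finset.sum_congr rfl fun i1 _ => step1 i1, Finset.sum_const, Finset.card_univ,
      Fintype.card_fin, nsmul_eq_mul]
  unfold Vstat
  rw [T1, T2, T3]
  subst hn2
  have hh' : ((h:ℝ)) ≠ 0 := Nat.cast_ne_zero.2 hh.ne'
  push_cast
  field_simp
  ring

lemma Vstat_le_bound {n : ℕ} (hn : 0 < n) {X : Fin 2 → Type*}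
    (k : ∀ j, X j → X j → ℝ) (K : Fin 2 → ℝ)
    (hbdd : ∀ j, ∀ x y : X j, 0 ≤ k j x y ∧ k j x y ≤ K j)
    (hK : ∀ j, 0 ≤ K j)
    (Z : Fin n → ∀ j, X j) : Vstat k Z ≤ 2 * (K 0 * K 1) := by
  have key : ∀ u v : ∀ j, X j, 0 ≤ ∏ j : Fin 2, k j (u j) (v j)
      ∧ ∏ j : Fin 2, k j (u j) (v j) ≤ K 0 * K 1 := by
    intro u v
    rw [Fin.prod_univ_two]
    exact ⟨mul_nonneg (hbdd 0 _ _).1 (hbdd 1 _ _).1,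
      mul_le_mul (hbdd 0 _ _).2 (hbdd 1 _ _).2 (hbdd 1 _ _).1 (hK 0)⟩
  have hn' : (0:ℝ) < (n:ℝ) := by exact_mod_cast hn
  have hT1 : ∑ i1 : Fin n, ∑ i2 : Fin n, ∏ j : Fin 2, k j (Z i1 j) (Z i2 j)
      ≤ (n:ℝ)^2 * (K 0 * K 1) := by
    calc ∑ i1 : Fin n, ∑ i2 : Fin n, ∏ j : Fin 2, k j (Z i1 j) (Z i2 j)
        ≤ ∑ _i1 : Fin n, ∑ _i2 : Fin n, (K 0 * K 1) :=
          Finset.sum_le_sum fun i1 _ => Finset.sum_le_sum fun i2 _ => (key (Z i1) (Z i2)).2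
      _ = (n:ℝ)^2 * (K 0 * K 1) := by
          simp [Finset.sum_const, Finset.card_univ]; ring
  have hT2 : ∑ a : Fin 2 → Fin n, ∑ b : Fin 2 → Fin n, ∏ j : Fin 2, k j (Z (a j) j) (Z (b j) j)
      ≤ (n:ℝ)^(2*2) * (K 0 * K 1) := by
    calc ∑ a : Fin 2 → Fin n, ∑ b : Fin 2 → Fin n, ∏ j : Fin 2, k j (Z (a j) j) (Z (b j) j)
        ≤ ∑ _a : Fin 2 → Fin n, ∑ _b : Fin 2 → Fin n, (K 0 * K 1) :=
          Finset.sum_le_sum fun a _ => Finset.sum_le_sum fun b _ =>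
            (key (fun j => Z (a j) j) (fun j => Z (b j) j)).2
      _ = (n:ℝ)^(2*2) * (K 0 * K 1) := by
          simp [Finset.sum_const, Finset.card_univ]; ring
  have hT3 : 0 ≤ ∑ i1 : Fin n, ∑ c : Fin 2 → Fin n, ∏ j : Fin 2, k j (Z i1 j) (Z (c j) j) :=
    Finset.sum_nonneg fun i1 _ => Finset.sum_nonneg fun c _ =>
      (key (Z i1) (fun j => Z (c j) j)).1
  unfold Vstat
  have c1 : (0:ℝ) ≤ ((n:ℝ)^2)⁻¹ := by positivity
  have c2 : (0:ℝ) ≤ ((n:ℝ)^(2*2))⁻¹ := by positivity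
  have e1 : ((n:ℝ)^2)⁻¹ * (∑ i1 : Fin n, ∑ i2 : Fin n, ∏ j : Fin 2, k j (Z i1 j) (Z i2 j))
      ≤ K 0 * K 1 := by
    refine le_trans (mul_le_mul_of_nonneg_left hT1 c1) (le_of_eq ?_)
    field_simp
  have e2 : ((n:ℝ)^(2*2))⁻¹ * (∑ a : Fin 2 → Fin n, ∑ b : Fin 2 → Fin n, ∏ j : Fin 2, k j (Z (a j) j) (Z (b j) j))
      ≤ K 0 * K 1 := by
    refine le_trans (mul_le_mul_of_nonneg_left hT2 c2) (le_of_eq ?_)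
    field_simp
  have e3 : 0 ≤ 2 * ((n:ℝ)^(2+1))⁻¹ *
      (∑ i1 : Fin n, ∑ c : Fin 2 → Fin n, ∏ j : Fin 2, k j (Z i1 j) (Z (c j) j)) :=
    mul_nonneg (by positivity) hT3
  linarith


/-- lower bound for the sensitivity of the bootstrap dHSIC
for `d = 2`, translation invariant kernels with non-empty level sets. -/
theorem bootstrap_dHSIC_sensitivity_lower_bound
    {n : ℕ} (hn : 0 < n) (hdvd : 4 ∣ n)
    (X : Fin 2 → Type*) [∀ j, AddGroup (X j)]
    (κ : ∀ j, X j → ℝ) (k : ∀ j, X j → X j → ℝ) (K : Fin 2 → ℝ)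
    (htrans : ∀ j, ∀ x y : X j, k j x y = κ j (x - y))
    (hKdef : ∀ j, K j = κ j 0)
    (hpsd : ∀ j, IsSymmPSDKernel (k j))
    (hbdd : ∀ j, ∀ x y : X j, 0 ≤ k j x y ∧ k j x y ≤ K j)
    (hlevel : ∀ j, ∀ ε : ℝ, 0 < ε → ε < K j → ∃ x y : X j, k j x y ≤ ε) :
    (3 / 8 : ℝ) * Real.sqrt (K 0 * K 1)
      ≤ sSup {v : ℝ |
          ∃ (b : Fin 2 → (Fin n → Fin n)) (D D' : Fin n → ∀ j, X j),
            hamD D D' ≤ 1 ∧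
            v = |dHSICemp k (bootD b D) - dHSICemp k (bootD b D')|} := by
  classical
  have hK0 : ∀ j, 0 ≤ K j := fun j => le_trans (hbdd j 0 0).1 (hbdd j 0 0).2
  have hKxx : ∀ j (z : X j), k j z z = K j := fun j z => by
    rw [htrans, sub_self, ← hKdef]
  -- boundedness
  have hBdd : BddAbove {v : ℝ |
      ∃ (b : Fin 2 → (Fin n → Fin n)) (D D' : Fin n → ∀ j, X j),
        hamD D D' ≤ 1 ∧
        v = |dHSICemp k (bootD b D) - dHSICemp k (bootD b D')|} := by
    refine ⟨Real.sqrt (2 * (K 0 * K 1)), ?_⟩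
    rintro v ⟨b, D, D', -, rfl⟩
    have hub : ∀ Z : Fin n → ∀ j, X j, dHSICemp k Z ≤ Real.sqrt (2 * (K 0 * K 1)) :=
      fun Z => Real.sqrt_le_sqrt (Vstat_le_bound hn k K hbdd hK0 Z)
    have hlb : ∀ Z : Fin n → ∀ j, X j, 0 ≤ dHSICemp k Z := fun Z => Real.sqrt_nonneg _
    rw [abs_sub_le_iff]
    exact ⟨by linarith [hub (bootD b D), hlb (bootD b D')],
      by linarith [hub (bootD b D'), hlb (bootD b D)]⟩
  by_cases hcase : K 0 = 0 ∨ K 1 = 0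
  · have hz : K 0 * K 1 = 0 := by rcases hcase with h | h <;> simp [h]
    rw [hz, Real.sqrt_zero, mul_zero]
    refine le_csSup hBdd ⟨fun _ => id, fun _ j => 0, fun _ j => 0, ?_, by simp⟩
    have : {i : Fin n | (fun _ (j : Fin 2) => (0 : X j)) i ≠ (fun _ (j : Fin 2) => (0 : X j)) i}
        = ∅ := by simp
    rw [hamD, this, Set.ncard_empty]
    omega
  · push_neg at hcase
    have hKp : ∀ j : Fin 2, 0 < K j := by
      intro j
      fin_cases j
      · exact lt_of_le_of_ne (hK0 0) (Ne.symm hcase.1)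
      · exact lt_of_le_of_ne (hK0 1) (Ne.symm hcase.2)
    obtain ⟨m, hm⟩ := hdvd
    have hm0 : 0 < m := by omega
    set h : ℕ := 2 * m with hhdef
    have hn2 : n = 2 * h := by omega
    have hh : 0 < h := by omega
    have hn1 : 1 < n := by omega
    choose x y hxy using fun j => hlevel j (K j / 4) (by linarith [hKp j]) (by linarith [hKp j])
    set e : Fin 2 → ℝ := fun j => k j (x j) (y j) with hedef
    have he0 : ∀ j, 0 ≤ e j := fun j => (hbdd j _ _).1
    have he1 : ∀ j, e j ≤ K j / 4 := fun j => hxy j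
    set b : Fin 2 → Fin n → Fin n :=
      fun _ i => if (i : ℕ) < h then (⟨0, hn⟩ : Fin n) else ⟨1, hn1⟩ with hbdef
    set D : Fin n → ∀ j, X j := fun i j => if (i : ℕ) = 0 then x j else y j with hDdef
    set D' : Fin n → ∀ j, X j := fun _ j => y j with hD'def
    have hham : hamD D D' ≤ 1 := by
      have hsub : {i : Fin n | D i ≠ D' i} ⊆ {(⟨0, hn⟩ : Fin n)} := by
        intro i hi
        simp only [Set.mem_setOf_eq] at hi
        simp only [Set.mem_singleton_iff]
        by_contra hne
        apply hi
        funext j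
        have hi0 : (i : ℕ) ≠ 0 := fun h0 => hne (Fin.ext h0)
        simp [hDdef, hD'def, hi0]
      calc hamD D D' ≤ ({(⟨0, hn⟩ : Fin n)} : Set (Fin n)).ncard :=
            Set.ncard_le_ncard hsub (Set.finite_singleton _)
        _ = 1 := Set.ncard_singleton _
    refine le_trans ?_ (le_csSup hBdd ⟨b, D, D', hham, rfl⟩)
    have hZ : bootD b D = fun (i : Fin n) (j : Fin 2) => if (i : ℕ) < h then x j else y j := by
      funext i j
      by_cases hi : (i : ℕ) < h <;> simp [bootD, hbdef, hDdef, hi]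
    have hZ' : bootD b D' = fun (i : Fin n) (j : Fin 2) => if (i : ℕ) < h then y j else y j := by
      funext i j
      simp [bootD, hD'def]
    have hd' : dHSICemp k (bootD b D') = 0 := by
      rw [dHSICemp, hZ', Vstat_two_block hn2 hh k y y K K (fun j => hKxx j (y j))
        (fun j => hKxx j (y j)) (fun j => hKxx j (y j)) (fun j => hKxx j (y j))]
      simp
    have hd : dHSICemp k (bootD b D) = Real.sqrt ((K 0 - e 0) * (K 1 - e 1) / 4) := by
      rw [dHSICemp, hZ, Vstat_two_block hn2 hh k x y K e (fun j => hKxx j (x j))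
        (fun j => hKxx j (y j)) (fun j => rfl) (fun j => (hpsd j).1 (y j) (x j))]
    rw [hd, hd', sub_zero, abs_of_nonneg (Real.sqrt_nonneg _)]
    have h38 : Real.sqrt ((9 : ℝ) / 64) = 3 / 8 := by
      rw [show (9 / 64 : ℝ) = (3 / 8) ^ 2 by norm_num]
      exact Real.sqrt_sq (by norm_num)
    have heq : (3 / 8 : ℝ) * Real.sqrt (K 0 * K 1)
        = Real.sqrt ((9 / 64) * (K 0 * K 1)) := by
      rw [Real.sqrt_mul (by norm_num : (0:ℝ) ≤ 9 / 64), h38]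
    rw [heq]
    apply Real.sqrt_le_sqrt
    have hmul : (3 / 4 * K 0) * (3 / 4 * K 1) ≤ (K 0 - e 0) * (K 1 - e 1) := by
      apply mul_le_mul
      · linarith [he1 0]
      · linarith [he1 1]
      · linarith [hKp 1]
      · linarith [he0 0, he1 0, hKp 0]
    nlinarith [hKp 0, hKp 1]

end
end

section
/- Let n ≥ 1, let x_1,…,x_{n+1} ∈ ℝ, and let α ∈ [0,1). Define q_{1−α} = inf{t ∈ ℝ : #{i ∈ {1,…,n+1} : x_i ≤ t} ≥ (1−α)(n+1)}. Then (n+1)^{-1}·(#{i ∈ {1,…,n} : x_{n+1} ≤ x_i} + 1) ≤ α holds if and only if x_{n+1} > q_{1−α}. -/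
noncomputable section

lemma count_last (n : ℕ) (x : Fin (n+1) → ℝ) :
    ({i : Fin (n+1) | x (Fin.last n) ≤ x i}).ncard
      = ({i : Fin n | x (Fin.last n) ≤ x i.castSucc}).ncard + 1 := by
  classical
  rw [Set.ncard_eq_toFinset_card', Set.ncard_eq_toFinset_card']
  simp only [Set.toFinset_setOf]
  rw [Fin.univ_castSuccEmb, Finset.filter_cons, if_pos le_rfl,
      Finset.card_cons, Finset.filter_map, Finset.card_map]
  rfl

lemma count_compl (n : ℕ) (x : Fin (n+1) → ℝ) :
    ({i : Fin (n+1) | x i < x (Fin.last n)}).ncard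
      + ({i : Fin (n+1) | x (Fin.last n) ≤ x i}).ncard = n + 1 := by
  classical
  have h : {i : Fin (n+1) | x i < x (Fin.last n)}
      = {i : Fin (n+1) | x (Fin.last n) ≤ x i}ᶜ := by
    ext i; simp [not_le]
  rw [h, add_comm, Set.ncard_add_ncard_compl]
  simp

/-- The `γ`-quantile of a finite tuple of reals:
`inf{t : #{i : y i ≤ t} ≥ γ m}`. -/
def quantile {m : ℕ} (γ : ℝ) (x : Fin m → ℝ) : ℝ :=
  sInf {t : ℝ | γ * (m : ℝ) ≤ (({i : Fin m | x i ≤ t}).ncard : ℝ)}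

/-- quantile representation of the permutation p-value test. -/
theorem pvalue_quantile_representation
    {n : ℕ} (hn : 1 ≤ n) (x : Fin (n + 1) → ℝ) (α : ℝ)
    (hα0 : 0 ≤ α) (hα1 : α < 1) :
    ((({i : Fin n | x (Fin.last n) ≤ x i.castSucc}).ncard : ℝ) + 1) / ((n : ℝ) + 1) ≤ α
      ↔ quantile (1 - α) x < x (Fin.last n) := by
  classical
  set a := x (Fin.last n) with ha
  set S := {t : ℝ | (1 - α) * ((n + 1 : ℕ) : ℝ)
      ≤ (({i : Fin (n+1) | x i ≤ t}).ncard : ℝ)} with hS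
  have hq : quantile (1 - α) x = sInf S := rfl
  have hm0 : (0 : ℝ) < ((n + 1 : ℕ) : ℝ) := by positivity
  have hγ : (0 : ℝ) < 1 - α := by linarith
  set A := {i : Fin (n+1) | x i < a} with hA
  have hAfin : A.Finite := Set.toFinite _
  have hcompl := count_compl n x
  have hcount := count_last n x
  set c := ({i : Fin n | a ≤ x i.castSucc}).ncard with hc
  have hAcard : (A.ncard : ℝ) = ((n + 1 : ℕ) : ℝ) - ((c : ℝ) + 1) := by
    have : A.ncard + (c + 1) = n + 1 := by rw [← hcount]; exact hcompl
    have := congrArg (fun k : ℕ => (k : ℝ)) this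
    push_cast at this ⊢
    linarith
  have hsub : ∀ t : ℝ, t < a → (({i : Fin (n+1) | x i ≤ t}).ncard : ℝ) ≤ A.ncard := by
    intro t ht
    have : {i : Fin (n+1) | x i ≤ t} ⊆ A := fun i hi => lt_of_le_of_lt hi ht
    exact_mod_cast Set.ncard_le_ncard this hAfin
  have hSne : S.Nonempty := by
    obtain ⟨j, -, hj⟩ := Finset.exists_max_image (Finset.univ : Finset (Fin (n+1)))
      x ⟨Fin.last n, Finset.mem_univ _⟩
    refine ⟨x j, ?_⟩
    have huniv : {i : Fin (n+1) | x i ≤ x j} = Set.univ := by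
      ext i; simpa using hj i (Finset.mem_univ i)
    rw [Set.mem_setOf_eq, huniv]
    have : ((Set.univ : Set (Fin (n+1))).ncard : ℝ) = ((n + 1 : ℕ) : ℝ) := by
      rw [Set.ncard_univ]; simp
    rw [this]
    nlinarith
  have hSbdd : BddBelow S := by
    obtain ⟨j0, -, hj0⟩ := Finset.exists_min_image (Finset.univ : Finset (Fin (n+1)))
      x ⟨Fin.last n, Finset.mem_univ _⟩
    refine ⟨x j0, fun t ht => ?_⟩
    rw [Set.mem_setOf_eq] at ht
    have hpos : (0 : ℝ) < (({i : Fin (n+1) | x i ≤ t}).ncard : ℝ) := by nlinarith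
    have hne : {i : Fin (n+1) | x i ≤ t}.Nonempty := by
      rw [Set.nonempty_iff_ne_empty]
      intro h
      rw [h] at hpos; simp at hpos
    obtain ⟨i, hi⟩ := hne
    exact le_trans (hj0 i (Finset.mem_univ i)) hi
  rw [hq]
  constructor
  · intro h
    have h' : (c : ℝ) + 1 ≤ α * ((n + 1 : ℕ) : ℝ) := by
      rw [div_le_iff₀ (by positivity : (0:ℝ) < (n:ℝ) + 1)] at h
      push_cast at h ⊢
      linarith
    have hApos : (0 : ℝ) < (A.ncard : ℝ) := by
      rw [hAcard]; nlinarith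
    have hAne : A.Nonempty := by
      rw [Set.nonempty_iff_ne_empty]
      intro hE; rw [hE] at hApos; simp at hApos
    obtain ⟨j, hjA, hj⟩ := Finset.exists_max_image hAfin.toFinset x
      (by rwa [Set.Finite.toFinset_nonempty])
    rw [Set.Finite.mem_toFinset] at hjA
    have hxjS : x j ∈ S := by
      rw [Set.mem_setOf_eq]
      have hsub2 : A ⊆ {i : Fin (n+1) | x i ≤ x j} := by
        intro i hi
        exact hj i (hAfin.mem_toFinset.mpr hi)
      have : (A.ncard : ℝ) ≤ (({i : Fin (n+1) | x i ≤ x j}).ncard : ℝ) := by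
        exact_mod_cast Set.ncard_le_ncard hsub2 (Set.toFinite _)
      rw [hAcard] at this
      nlinarith
    calc sInf S ≤ x j := csInf_le hSbdd hxjS
      _ < a := hjA
  · intro h
    obtain ⟨t, htS, hta⟩ : ∃ t ∈ S, t < a := by
      by_contra hcon
      push_neg at hcon
      exact absurd (le_csInf hSne hcon) (not_le.mpr h)
    rw [Set.mem_setOf_eq] at htS
    have h1 : (1 - α) * ((n + 1 : ℕ) : ℝ) ≤ (A.ncard : ℝ) :=
      le_trans htS (hsub t hta)
    rw [hAcard] at h1
    rw [div_le_iff₀ (by positivity : (0:ℝ) < (n:ℝ) + 1)]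
    push_cast at h1 ⊢
    linarith

end
end

section
/- Let n ≥ 1, let x_1,…,x_{n+1} ∈ ℝ, and let α ∈ (0,1). Set α⋆ = max{(n+1)α/n − 1/n, 0}, let q_{1−α} be the (1−α)-quantile of (x_1,…,x_{n+1}) and let r_{1−α⋆} be the (1−α⋆)-quantile of (x_1,…,x_n). Then 1{x_{n+1} > q_{1−α}} = 1{x_{n+1} > r_{1−α⋆}}·1{α ≥ 1/(n+1)}. -/
noncomputable section

namespace QuantAux

variable {m : ℕ}

lemma mono (x : Fin m → ℝ) {s t : ℝ} (h : s ≤ t) :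
    ({i : Fin m | x i ≤ s}).ncard ≤ ({i : Fin m | x i ≤ t}).ncard := by
  apply Set.ncard_le_ncard
  · intro i hi; exact le_trans hi h
  · exact Set.toFinite _

lemma nonempty_A (hm : 0 < m) (x : Fin m → ℝ) {c : ℝ} (hcm : c ≤ m) :
    {t : ℝ | c ≤ (({i : Fin m | x i ≤ t}).ncard : ℝ)}.Nonempty := by
  have hne : (Finset.univ : Finset (Fin m)).Nonempty := by
    simpa [Finset.univ_nonempty_iff] using Fin.pos_iff_nonempty.mp hm
  obtain ⟨b, _, hb⟩ := Finset.exists_max_image Finset.univ x hne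
  refine ⟨x b, ?_⟩
  have : {i : Fin m | x i ≤ x b} = Set.univ := by
    ext i; simp [hb i (Finset.mem_univ i)]
  simp only [Set.mem_setOf_eq, this, Set.ncard_univ, Nat.card_eq_fintype_card,
    Fintype.card_fin]
  exact hcm

lemma bddBelow_A (hm : 0 < m) (x : Fin m → ℝ) {c : ℝ} (hc0 : 0 < c) :
    BddBelow {t : ℝ | c ≤ (({i : Fin m | x i ≤ t}).ncard : ℝ)} := by
  have hne : (Finset.univ : Finset (Fin m)).Nonempty := by
    simpa [Finset.univ_nonempty_iff] using Fin.pos_iff_nonempty.mp hm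
  obtain ⟨b, _, hb⟩ := Finset.exists_min_image Finset.univ x hne
  refine ⟨x b, fun t ht => ?_⟩
  have hne0 : ({i : Fin m | x i ≤ t}).ncard ≠ 0 := by
    intro h0
    have : c ≤ ((0 : ℕ) : ℝ) := h0 ▸ ht
    norm_num at this; linarith
  obtain ⟨i, hi⟩ := Set.nonempty_of_ncard_ne_zero hne0
  exact le_trans (hb i (Finset.mem_univ i)) hi

lemma sInf_mem (hm : 0 < m) (x : Fin m → ℝ) {c : ℝ} (hc0 : 0 < c) (hcm : c ≤ m) :
    sInf {t : ℝ | c ≤ (({i : Fin m | x i ≤ t}).ncard : ℝ)}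
      ∈ {t : ℝ | c ≤ (({i : Fin m | x i ≤ t}).ncard : ℝ)} := by
  set A := {t : ℝ | c ≤ (({i : Fin m | x i ≤ t}).ncard : ℝ)} with hA
  have hAne := nonempty_A hm x hcm
  have hAbdd := bddBelow_A hm x hc0
  set q := sInf A with hq
  by_contra hqA
  have hlt : (({i : Fin m | x i ≤ q}).ncard : ℝ) < c := by
    simpa [hA, not_le] using hqA
  have hT : {i : Fin m | q < x i}.Nonempty := by
    by_contra hTne
    rw [Set.not_nonempty_iff_eq_empty] at hTne
    have huniv : {i : Fin m | x i ≤ q} = Set.univ := by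
      ext i
      simp only [Set.mem_setOf_eq, Set.mem_univ, iff_true]
      by_contra h
      have hmem : i ∈ {i : Fin m | q < x i} := lt_of_not_ge h
      rw [hTne] at hmem
      exact hmem
    rw [huniv] at hlt
    simp only [Set.ncard_univ, Nat.card_eq_fintype_card, Fintype.card_fin] at hlt
    linarith
  -- t' = min of x over {i | q < x i}
  have hTfin : {i : Fin m | q < x i}.Finite := Set.toFinite _
  obtain ⟨j, hj, hjmin⟩ := Set.exists_min_image _ x hTfin hT
  have hqj : q < x j := hj
  -- x j is a lower bound of A
  have hlb : ∀ t ∈ A, x j ≤ t := by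
    intro t ht
    by_contra h
    push_neg at h
    have hsub : {i : Fin m | x i ≤ t} ⊆ {i : Fin m | x i ≤ q} := by
      intro i hi
      simp only [Set.mem_setOf_eq] at hi ⊢
      by_contra hiq
      push_neg at hiq
      have : x j ≤ x i := hjmin i hiq
      linarith
    have := Set.ncard_le_ncard hsub (Set.toFinite _)
    have : (({i : Fin m | x i ≤ t}).ncard : ℝ) ≤ ({i : Fin m | x i ≤ q}).ncard := by
      exact_mod_cast this
    have := ht
    simp only [hA, Set.mem_setOf_eq] at this
    linarith
  have : x j ≤ q := le_csInf hAne hlb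
  linarith

lemma quantile_lt_iff (hm : 0 < m) (x : Fin m → ℝ) {c : ℝ} (hc0 : 0 < c) (hcm : c ≤ m)
    (y : ℝ) :
    sInf {t : ℝ | c ≤ (({i : Fin m | x i ≤ t}).ncard : ℝ)} < y ↔
      ∃ t, t < y ∧ c ≤ (({i : Fin m | x i ≤ t}).ncard : ℝ) := by
  constructor
  · intro h
    exact ⟨_, h, sInf_mem hm x hc0 hcm⟩
  · rintro ⟨t, hty, ht⟩
    exact lt_of_le_of_lt (csInf_le (bddBelow_A hm x hc0) ht) hty

end QuantAux

/-- alternative expression of the quantile threshold event,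
`1{x_{n+1} > q_{1-α}} = 1{x_{n+1} > r_{1-α⋆}}·1{α ≥ 1/(n+1)}` with
`α⋆ = max{(n+1)α/n − 1/n, 0}`. -/
theorem quantile_alternative_expression
    {n : ℕ} (hn : 1 ≤ n) (x : Fin (n + 1) → ℝ) (α : ℝ)
    (hα0 : 0 < α) (hα1 : α < 1) :
    (quantile (1 - α) x < x (Fin.last n))
      ↔ ((quantile (1 - max (((n : ℝ) + 1) * α / (n : ℝ) - 1 / (n : ℝ)) 0)
            (fun i : Fin n => x i.castSucc) < x (Fin.last n))
          ∧ 1 / ((n : ℝ) + 1) ≤ α) := by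
  have hn0 : (0 : ℝ) < n := by exact_mod_cast hn
  have hn1 : (0 : ℝ) < (n : ℝ) + 1 := by linarith
  set y := x (Fin.last n) with hy
  -- count equality for t < y
  have hcount : ∀ t : ℝ, t < y →
      ({i : Fin (n + 1) | x i ≤ t}).ncard
        = ({i : Fin n | x i.castSucc ≤ t}).ncard := by
    intro t ht
    have himg : {i : Fin (n + 1) | x i ≤ t}
        = Fin.castSucc '' {i : Fin n | x i.castSucc ≤ t} := by
      ext i
      simp only [Set.mem_setOf_eq, Set.mem_image]
      constructor
      · intro hi
        have hne : i ≠ Fin.last n := by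
          intro h; rw [h] at hi; exact absurd ht (not_lt.mpr hi)
        obtain ⟨j, rfl⟩ := Fin.exists_castSucc_eq.mpr hne
        exact ⟨j, hi, rfl⟩
      · rintro ⟨j, hj, rfl⟩; exact hj
    rw [himg, Set.ncard_image_of_injective _ (Fin.castSucc_injective n)]
  have hq1 : quantile (1 - α) x
      = sInf {t : ℝ | (1 - α) * ((n : ℝ) + 1) ≤ (({i : Fin (n+1) | x i ≤ t}).ncard : ℝ)} := by
    unfold quantile; push_cast; ring_nf
  by_cases hcase : 1 / ((n : ℝ) + 1) ≤ α
  · -- α ≥ 1/(n+1)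
    have hαn : 1 ≤ ((n : ℝ) + 1) * α := by
      rw [div_le_iff₀ hn1] at hcase; linarith
    have hmax : max (((n : ℝ) + 1) * α / (n : ℝ) - 1 / (n : ℝ)) 0
        = ((n : ℝ) + 1) * α / (n : ℝ) - 1 / (n : ℝ) := by
      apply max_eq_left
      rw [sub_nonneg, div_le_div_iff₀ hn0 hn0]
      nlinarith
    set c : ℝ := (1 - α) * ((n : ℝ) + 1) with hc
    have hc0 : 0 < c := by nlinarith
    have hcn : c ≤ n := by nlinarith
    have hq2 : quantile (1 - max (((n : ℝ) + 1) * α / (n : ℝ) - 1 / (n : ℝ)) 0)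
          (fun i : Fin n => x i.castSucc)
        = sInf {t : ℝ | c ≤ (({i : Fin n | x i.castSucc ≤ t}).ncard : ℝ)} := by
      unfold quantile
      rw [hmax]
      congr 1
      ext t
      have : (1 - (((n : ℝ) + 1) * α / (n : ℝ) - 1 / (n : ℝ))) * (n : ℝ) = c := by
        field_simp [hc]; ring
      rw [this]
    rw [hq1, hq2]
    rw [QuantAux.quantile_lt_iff (Nat.succ_pos n) x hc0 (by push_cast; linarith) y,
        QuantAux.quantile_lt_iff (by omega : 0 < n) _ hc0 hcn y]
    simp only [and_iff_left hcase]
    constructor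
    · rintro ⟨t, hty, ht⟩
      exact ⟨t, hty, by rwa [← hcount t hty]⟩
    · rintro ⟨t, hty, ht⟩
      exact ⟨t, hty, by rwa [hcount t hty]⟩
  · -- α < 1/(n+1) : both sides false
    push_neg at hcase
    have hαn : ((n : ℝ) + 1) * α < 1 := by
      have := (lt_div_iff₀ hn1).mp hcase; nlinarith
    constructor
    · intro h
      exfalso
      rw [hq1, QuantAux.quantile_lt_iff (Nat.succ_pos n) x
        (by nlinarith : (0:ℝ) < (1 - α) * ((n : ℝ) + 1))
        (by push_cast; nlinarith) y] at h
      obtain ⟨t, hty, ht⟩ := h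
      have hle : (({i : Fin (n+1) | x i ≤ t}).ncard : ℝ) ≤ n := by
        rw [hcount t hty]
        have := Set.ncard_le_ncard (Set.subset_univ {i : Fin n | x i.castSucc ≤ t})
          (Set.toFinite _)
        simp only [Set.ncard_univ, Nat.card_eq_fintype_card, Fintype.card_fin] at this
        exact_mod_cast this
      nlinarith
    · rintro ⟨-, h⟩
      exact absurd h (not_le.mpr hcase)

end
end

section
/- Let B ≥ 1 and let M_0, M_1, …, M_B be real random variables on a common probability space such that (exchangeability) for every permutation σ of {0,1,…,B} the joint law of (M_{σ(0)},…,M_{σ(B)}) equals the joint law of (M_0,…,M_B), and (no ties) P(M_i = M_j) = 0 for all i ≠ j. Then for every α ∈ [0,1], P( (B+1)^{-1}·(Σ_{i=1}^B 1{M_0 ≤ M_i} + 1) ≤ α ) = ⌊(B+1)α⌋/(B+1). -/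
/-!
The p-value is `R / (B + 1)`, where `R` is the rank of `M 0` counted from the top. By
exchangeability every coordinate's rank has the same law, and without ties almost surely exactly
one coordinate has rank `r` for each `r ∈ {1, …, B + 1}`. Hence `R` is uniform on
`{1, …, B + 1}`, and `p̂ ≤ α` means `R ≤ ⌊(B + 1) α⌋`.
-/

open MeasureTheory Finset

/-- The rank of `v j` counted from the top: the number of coordinates `i` (including `j`)
with `v j ≤ v i`. -/
def upperRank {α : Type*} [LinearOrder α] {n : ℕ} (v : Fin n → α) (j : Fin n) : ℕ :=
  #{i | v j ≤ v i}

section upperRank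

variable {α : Type*} [LinearOrder α] {n : ℕ}

theorem upperRank_comp_perm (v : Fin n → α) (σ : Equiv.Perm (Fin n)) (j : Fin n) :
    upperRank (v ∘ σ) j = upperRank v (σ j) := by
  simp only [upperRank, card_filter, Function.comp_apply]
  exact Equiv.sum_comp σ fun i => if v (σ j) ≤ v i then 1 else 0

theorem upperRank_mem_Icc (v : Fin n → α) (j : Fin n) : upperRank v j ∈ Icc 1 n :=
  mem_Icc.2 ⟨card_pos.2 ⟨j, by simp⟩, (card_filter_le _ _).trans_eq (card_fin n)⟩

theorem upperRank_lt_of_lt {v : Fin n → α} {j k : Fin n} (h : v j < v k) :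
    upperRank v k < upperRank v j := by
  refine card_lt_card ⟨fun i hi => ?_, fun hsub => ?_⟩
  · simp only [mem_filter, mem_univ, true_and] at hi ⊢
    exact h.le.trans hi
  · have hj := hsub (by simp : j ∈ ({i | v j ≤ v i} : Finset (Fin n)))
    simp only [mem_filter, mem_univ, true_and] at hj
    exact hj.not_gt h

theorem upperRank_injective {v : Fin n → α} (hv : Function.Injective v) :
    Function.Injective (upperRank v) := by
  intro j k hjk
  by_contra hne
  rcases (hv.ne hne).lt_or_gt with hlt | hlt
  · exact (upperRank_lt_of_lt hlt).ne' hjk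
  · exact (upperRank_lt_of_lt hlt).ne hjk

theorem image_upperRank {v : Fin n → α} (hv : Function.Injective v) :
    univ.image (upperRank v) = Icc 1 n :=
  eq_of_subset_of_card_le (fun _ hr => by
      obtain ⟨j, -, rfl⟩ := mem_image.1 hr
      exact upperRank_mem_Icc v j)
    (by simp [card_image_of_injective _ (upperRank_injective hv)])

theorem upperRank_zero (v : Fin (n + 1) → α) :
    upperRank v 0 = #{i : Fin n | v 0 ≤ v i.succ} + 1 := by
  simp only [upperRank, card_filter, Fin.sum_univ_succ, le_refl, if_true]
  ring

end upperRank

theorem measurable_upperRank {n : ℕ} (j : Fin n) :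
    Measurable fun v : Fin n → ℝ => upperRank v j := by
  simp only [upperRank, card_filter]
  exact Finset.measurable_sum _ fun i _ =>
    Measurable.ite (measurableSet_le (measurable_pi_apply j) (measurable_pi_apply i))
      measurable_const measurable_const

def IsExchangeable {ι α : Type*} [MeasurableSpace α] (μ : Measure (ι → α)) : Prop :=
  ∀ σ : Equiv.Perm ι, MeasurePreserving (fun v : ι → α => v ∘ σ) μ μ

theorem ae_injective_of_measure_eq_zero {ι α : Type*} [Finite ι] [MeasurableSpace α]
    {μ : Measure (ι → α)} (hties : ∀ i j, i ≠ j → μ {v | v i = v j} = 0) :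
    ∀ᵐ v ∂μ, Function.Injective v := by
  have hne : ∀ᵐ v ∂μ, ∀ i j, i ≠ j → v i ≠ v j := by
    refine Filter.eventually_all.2 fun i => Filter.eventually_all.2 fun j => ?_
    by_cases hij : i = j
    · exact Filter.Eventually.of_forall fun _ h => (h hij).elim
    · exact (measure_eq_zero_iff_ae_notMem.1 (hties i j hij)).mono fun _ hv _ => hv
  exact hne.mono fun v hv i j => not_imp_not.1 (hv i j)

section ExchangeableRanks

variable {n : ℕ} {μ : Measure (Fin n → ℝ)}

theorem IsExchangeable.measure_upperRank_eq (hμ : IsExchangeable μ) (j k : Fin n) (r : ℕ) :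
    μ {v | upperRank v j = r} = μ {v | upperRank v k = r} := by
  have hset : (fun v : Fin n → ℝ => v ∘ Equiv.swap k j) ⁻¹' {v | upperRank v k = r}
      = {v | upperRank v j = r} := by
    ext v
    simp [upperRank_comp_perm]
  rw [← hset]
  exact (hμ _).measure_preimage
    (measurable_upperRank k (measurableSet_singleton r)).nullMeasurableSet

/-- Almost surely exactly one coordinate has rank `r`. -/
theorem sum_measure_upperRank_eq (hinj : ∀ᵐ v ∂μ, Function.Injective v) {r : ℕ}
    (hr : r ∈ Icc 1 n) : ∑ j, μ {v | upperRank v j = r} = μ Set.univ := by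
  have hdisj : Pairwise (Function.onFun (AEDisjoint μ) fun j => {v | upperRank v j = r}) :=
    fun j k hjk => measure_eq_zero_iff_ae_notMem.2 <| hinj.mono fun v hv hmem =>
      hjk (upperRank_injective hv (hmem.1.trans hmem.2.symm))
  have hcover : (⋃ j, {v | upperRank v j = r}) =ᵐ[μ] Set.univ :=
    Filter.eventuallyEq_univ.2 <| hinj.mono fun v hv => by
      obtain ⟨j, -, hj⟩ := mem_image.1 ((image_upperRank hv).symm ▸ hr)
      exact Set.mem_iUnion.2 ⟨j, hj⟩
  rw [← measure_congr hcover, measure_iUnion₀ hdisj fun j =>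
    (measurable_upperRank j (measurableSet_singleton r)).nullMeasurableSet, tsum_fintype]

variable [IsProbabilityMeasure μ]

theorem IsExchangeable.measure_upperRank_eq_inv (hμ : IsExchangeable μ)
    (hinj : ∀ᵐ v ∂μ, Function.Injective v) (j : Fin n) {r : ℕ} (hr : r ∈ Icc 1 n) :
    μ {v | upperRank v j = r} = (n : ENNReal)⁻¹ := by
  have hsum := sum_measure_upperRank_eq hinj hr
  simp only [hμ.measure_upperRank_eq _ j, sum_const, card_univ, Fintype.card_fin,
    nsmul_eq_mul, measure_univ] at hsum
  exact ENNReal.eq_inv_of_mul_eq_one_left (by rwa [mul_comm] at hsum)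

theorem IsExchangeable.measure_upperRank_le (hμ : IsExchangeable μ)
    (hinj : ∀ᵐ v ∂μ, Function.Injective v) (j : Fin n) {m : ℕ} (hm : m ≤ n) :
    μ {v | upperRank v j ≤ m} = m / n := by
  have hset :
      {v : Fin n → ℝ | upperRank v j ≤ m} = (fun v => upperRank v j) ⁻¹' ↑(Icc 1 m) := by
    ext v
    simp [(mem_Icc.1 (upperRank_mem_Icc v j)).1]
  rw [hset, ← sum_measure_preimage_singleton _ fun r _ =>
    measurable_upperRank j (measurableSet_singleton r)]
  calc ∑ r ∈ Icc 1 m, μ {v | upperRank v j = r}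
      = ∑ r ∈ Icc 1 m, (n : ENNReal)⁻¹ :=
        sum_congr rfl fun r hr => hμ.measure_upperRank_eq_inv hinj j (Icc_subset_Icc_right hm hr)
    _ = m / n := by simp [div_eq_mul_inv]

end ExchangeableRanks

theorem resampling_pvalue_exact_level_general
    {Ω : Type*} [MeasurableSpace Ω] (P : Measure Ω) [IsProbabilityMeasure P]
    {B : ℕ} (M : Fin (B + 1) → Ω → ℝ)
    (hmeas : ∀ i, Measurable (M i))
    (hexch : ∀ σ : Equiv.Perm (Fin (B + 1)),
      P.map (fun ω => fun i => M (σ i) ω) = P.map (fun ω => fun i => M i ω))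
    (hties : ∀ i j, i ≠ j → P {ω | M i ω = M j ω} = 0)
    (α : ℝ) (hα0 : 0 ≤ α) (hα1 : α ≤ 1) :
    P {ω | ((∑ i : Fin B, if M 0 ω ≤ M i.succ ω then (1 : ℝ) else 0) + 1)
            / ((B : ℝ) + 1) ≤ α}
      = ENNReal.ofReal ((⌊((B : ℝ) + 1) * α⌋ : ℝ) / ((B : ℝ) + 1)) := by
  set X : Ω → Fin (B + 1) → ℝ := fun ω i => M i ω
  have hX : Measurable X := measurable_pi_lambda _ hmeas
  have : IsProbabilityMeasure (P.map X) := Measure.isProbabilityMeasure_map hX.aemeasurable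
  have hμ : IsExchangeable (P.map X) := fun σ =>
    ⟨by fun_prop, by rw [Measure.map_map (by fun_prop) hX]; exact hexch σ⟩
  have hinj : ∀ᵐ v ∂P.map X, Function.Injective v :=
    ae_injective_of_measure_eq_zero fun i j hij => by
      rw [Measure.map_apply hX (measurableSet_eq_fun (measurable_pi_apply i)
        (measurable_pi_apply j))]
      exact hties i j hij
  have hpos : (0 : ℝ) < B + 1 := by positivity
  have hx0 : 0 ≤ ((B : ℝ) + 1) * α := by positivity
  have hm : ⌊((B : ℝ) + 1) * α⌋₊ ≤ B + 1 :=
    Nat.floor_le_of_le (by exact_mod_cast mul_le_of_le_one_right hpos.le hα1)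
  have hset : {ω | ((∑ i : Fin B, if M 0 ω ≤ M i.succ ω then (1 : ℝ) else 0) + 1)
      / ((B : ℝ) + 1) ≤ α} =
        X ⁻¹' {v | upperRank v 0 ≤ ⌊((B : ℝ) + 1) * α⌋₊} := by
    ext ω
    simp only [Set.mem_ofPred_eq, Set.mem_preimage, Nat.le_floor_iff hx0, upperRank_zero, X,
      div_le_iff₀ hpos, mul_comm α]
    push_cast [natCast_card_filter]
    congr!
  rw [hset, ← Measure.map_apply hX (s := {v | upperRank v 0 ≤ _})
      (measurable_upperRank 0 measurableSet_Iic),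
    hμ.measure_upperRank_le hinj 0 hm, ← natCast_floor_eq_intCast_floor hx0,
    ENNReal.ofReal_div_of_pos hpos]
  norm_cast

/-- exact level of the resampling p-value for exchangeable
statistics without ties. -/
theorem resampling_pvalue_exact_level
    {Ω : Type*} [MeasurableSpace Ω] (P : Measure Ω) [IsProbabilityMeasure P]
    {B : ℕ} (hB : 1 ≤ B) (M : Fin (B + 1) → Ω → ℝ)
    (hmeas : ∀ i, Measurable (M i))
    (hexch : ∀ σ : Equiv.Perm (Fin (B + 1)),
      P.map (fun ω => fun i => M (σ i) ω) = P.map (fun ω => fun i => M i ω))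
    (hties : ∀ i j, i ≠ j → P {ω | M i ω = M j ω} = 0)
    (α : ℝ) (hα0 : 0 ≤ α) (hα1 : α ≤ 1) :
    P {ω | ((∑ i : Fin B, if M 0 ω ≤ M i.succ ω then (1 : ℝ) else 0) + 1)
            / ((B : ℝ) + 1) ≤ α}
      = ENNReal.ofReal ((⌊((B : ℝ) + 1) * α⌋ : ℝ) / ((B : ℝ) + 1)) :=
  resampling_pvalue_exact_level_general P M hmeas hexch hties α hα0 hα1
end

section
/- Let α ∈ (0,1). For each n ∈ ℕ let (Ω_n, F_n, P_n) be a probability space carrying a random element X_n of a measurable space E_n and random elements W_{n,0}, W_{n,1}, …, W_{n,B_n} of a measurable space F_n that are i.i.d. and independent of X_n, where B_n ∈ ℕ satisfies B_n > α^{-1} − 1. Let f_n, g_n : E_n × F_n → ℝ be measurable, set M_{n,0} = f_n(X_n, W_{n,0}) and M_{n,i} = g_n(X_n, W_{n,i}) for 1 ≤ i ≤ B_n, and define p̂_n = (B_n + 1)^{-1}·(Σ_{i=1}^{B_n} 1{M_{n,0} ≤ M_{n,i}} + 1). If lim_{n→∞} P_n(M_{n,0} ≤ M_{n,1}) exists and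 is strictly greater than α, then limsup_{n→∞} P_n(p̂_n ≤ α) < 1. -/
open MeasureTheory ProbabilityTheory Filter

/-!
Let `S` count the indices `i ≥ 1` with `M_{n,0} ≤ M_{n,i}`. Since `X_n` is independent of the
i.i.d. `W_{n,i}`, every triple `(X_n, W_{n,0}, W_{n,i})` with `i ≠ 0` has the law of
`(X_n, W_{n,0}, W_{n,1})`, so `E S = B_n p_n` with `p_n = P(M_{n,0} ≤ M_{n,1})`. Rejection forces
`B_n - S ≥ (B_n + 1)(1 - α)`, and Markov's inequality for `B_n - S ≥ 0` gives
`P(p̂_n ≤ α) ≤ (1 - p_n) / (1 - α) → (1 - L) / (1 - α) < 1`.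
-/

section

variable {Ω E F ι : Type*} [MeasurableSpace Ω] [MeasurableSpace E] [MeasurableSpace F]
  {μ : Measure Ω} [IsProbabilityMeasure μ]

theorem identDistrib_prodMk_pair_of_iIndepFun {X : Ω → E} {W : ι → Ω → F}
    (hX : Measurable X) (hW : ∀ i, Measurable (W i)) (hiid : iIndepFun W μ)
    (hindep : IndepFun (fun ω i => W i ω) X μ) {i j k : ι} (hij : i ≠ j) (hik : i ≠ k)
    (hjk : μ.map (W j) = μ.map (W k)) :
    IdentDistrib (fun ω => (X ω, W i ω, W j ω)) (fun ω => (X ω, W i ω, W k ω)) μ μ := by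
  have hpair : IdentDistrib (fun ω => (W i ω, W j ω)) (fun ω => (W i ω, W k ω)) μ μ :=
    (IdentDistrib.refl (hW i).aemeasurable).prodMk
      ⟨(hW j).aemeasurable, (hW k).aemeasurable, hjk⟩
      (hiid.indepFun hij) (hiid.indepFun hik)
  have hindep_pair : ∀ l, IndepFun X (fun ω => (W i ω, W l ω)) μ := fun l =>
    (hindep.comp ((measurable_pi_apply i).prodMk (measurable_pi_apply l)) measurable_id).symm
  exact (IdentDistrib.refl hX.aemeasurable).prodMk hpair (hindep_pair j) (hindep_pair k)

theorem measureReal_pValue_le [Fintype ι] {s : ι → Set Ω} (hs : ∀ i, MeasurableSet (s i))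
    {p α : ℝ} (hp : ∀ i, p ≤ μ.real (s i)) (hp1 : p ≤ 1) (hα : α < 1) :
    μ.real {ω | (∑ i, (s i).indicator 1 ω + 1) / (Fintype.card ι + 1) ≤ α}
      ≤ (1 - p) / (1 - α) := by
  set N : ℝ := (Fintype.card ι : ℝ)
  set S : Ω → ℝ := fun ω => ∑ i, (s i).indicator 1 ω
  have hind_int : ∀ i ∈ Finset.univ, Integrable ((s i).indicator (1 : Ω → ℝ)) μ :=
    fun i _ => (integrable_const 1).indicator (hs i)
  have hS_le : ∀ ω, S ω ≤ N := fun ω => by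
    calc S ω ≤ ∑ _i : ι, (1 : ℝ) :=
          Finset.sum_le_sum fun i _ => Set.indicator_le_self' (fun _ _ => zero_le_one) ω
      _ = N := by simp [N]
  have hS_integral_ge : N * p ≤ ∫ ω, S ω ∂μ := by
    rw [integral_finsetSum _ hind_int]
    simp only [integral_indicator_one (hs _)]
    calc N * p = ∑ _i : ι, p := by simp [N]
      _ ≤ _ := Finset.sum_le_sum fun i _ => hp i
  have hS_int : Integrable S μ := integrable_finsetSum _ hind_int
  have hmarkov := mul_meas_ge_le_integral_of_nonneg
    (Eventually.of_forall fun ω => sub_nonneg.2 (hS_le ω)) ((integrable_const N).sub hS_int)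
    ((N + 1) * (1 - α))
  rw [integral_sub (integrable_const N) hS_int, integral_const, probReal_univ, one_smul]
    at hmarkov
  have hsubset : {ω | (S ω + 1) / (N + 1) ≤ α} ⊆ {ω | (N + 1) * (1 - α) ≤ N - S ω} :=
    fun ω hω => by
      have := (div_le_iff₀ (by positivity : (0 : ℝ) < N + 1)).1 hω
      simp only [Set.mem_ofPred_eq]
      linarith
  change μ.real {ω | (S ω + 1) / (N + 1) ≤ α} ≤ _
  rw [le_div_iff₀ (sub_pos.2 hα)]
  refine le_of_mul_le_mul_left ?_ (by positivity : (0 : ℝ) < N + 1)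
  calc (N + 1) * (μ.real {ω | (S ω + 1) / (N + 1) ≤ α} * (1 - α))
      = (N + 1) * (1 - α) * μ.real {ω | (S ω + 1) / (N + 1) ≤ α} := by ring
    _ ≤ (N + 1) * (1 - α) * μ.real {ω | (N + 1) * (1 - α) ≤ N - S ω} :=
        mul_le_mul_of_nonneg_left (measureReal_mono hsubset)
          (mul_nonneg (by positivity) (sub_nonneg.2 hα.le))
    _ ≤ N - ∫ ω, S ω ∂μ := hmarkov
    _ ≤ N * (1 - p) := by linarith
    _ ≤ (N + 1) * (1 - p) := by gcongr; linarith

end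

theorem resampling_test_inconsistent_general
    (α : ℝ) (hα1 : α < 1)
    (Ω : ℕ → Type*) [mΩ : ∀ n, MeasurableSpace (Ω n)]
    (P : ∀ n, Measure (Ω n)) [hP : ∀ n, IsProbabilityMeasure (P n)]
    (E F : ℕ → Type*) [mE : ∀ n, MeasurableSpace (E n)] [mF : ∀ n, MeasurableSpace (F n)]
    (B : ℕ → ℕ)
    (X : ∀ n, Ω n → E n) (hX : ∀ n, Measurable (X n))
    (W : ∀ n, Fin (B n + 1) → Ω n → F n) (hW : ∀ n i, Measurable (W n i))
    (hiid : ∀ n, iIndepFun (W n) (P n))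
    (hident : ∀ n, ∀ i : Fin (B n + 1), (P n).map (W n i) = (P n).map (W n 0))
    (hindepX : ∀ n, IndepFun (fun ω => fun i => W n i ω) (X n) (P n))
    (f g : ∀ n, E n × F n → ℝ) (hf : ∀ n, Measurable (f n)) (hg : ∀ n, Measurable (g n))
    (L : ℝ) (hL : α < L)
    (hlim : Tendsto
      (fun n => ((P n) {ω | f n (X n ω, W n 0 ω) ≤ g n (X n ω, W n 1 ω)}).toReal)
      atTop (nhds L)) :
    limsup (fun n => ((P n) {ω |
        ((∑ i : Fin (B n),
            if f n (X n ω, W n 0 ω) ≤ g n (X n ω, W n i.succ ω) then (1 : ℝ) else 0) + 1)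
          / ((B n : ℝ) + 1) ≤ α}).toReal) atTop < 1 := by
  set p := fun n => (P n).real {ω | f n (X n ω, W n 0 ω) ≤ g n (X n ω, W n 1 ω)}
  have hbound : ∀ n, (P n).real {ω |
      ((∑ i : Fin (B n),
          if f n (X n ω, W n 0 ω) ≤ g n (X n ω, W n i.succ ω) then (1 : ℝ) else 0) + 1)
        / ((B n : ℝ) + 1) ≤ α} ≤ (1 - p n) / (1 - α) := fun n => by
    have hC : MeasurableSet {q : E n × F n × F n | f n (q.1, q.2.1) ≤ g n (q.1, q.2.2)} :=
      measurableSet_le (by fun_prop) (by fun_prop)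
    have hp_le : ∀ i : Fin (B n),
        p n ≤ (P n).real {ω | f n (X n ω, W n 0 ω) ≤ g n (X n ω, W n i.succ ω)} := by
      intro i
      have h01 : (0 : Fin (B n + 1)) ≠ 1 :=
        Ne.symm <| Fin.one_eq_zero_iff.not.2 (by have := i.pos; omega)
      have hlaw := identDistrib_prodMk_pair_of_iIndepFun (hX n) (hW n) (hiid n) (hindepX n)
        (Fin.succ_ne_zero i).symm h01 ((hident n _).trans (hident n 1).symm)
      exact (congrArg ENNReal.toReal (hlaw.measure_mem_eq hC)).ge
    simpa [Set.indicator_apply] using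
      measureReal_pValue_le (fun i => measurableSet_le (by fun_prop) (by fun_prop)) hp_le
        measureReal_le_one hα1
  have hb : Tendsto (fun n => (1 - p n) / (1 - α)) atTop (nhds ((1 - L) / (1 - α))) :=
    (tendsto_const_nhds.sub hlim).div_const _
  calc _ ≤ (1 - L) / (1 - α) := by
        rw [← hb.limsup_eq]
        exact limsup_le_limsup (Eventually.of_forall hbound)
          (isCoboundedUnder_le_of_le atTop fun n => measureReal_nonneg) hb.isBoundedUnder_le
    _ < 1 := by rw [div_lt_one (by linarith)]; linarith

/-- inconsistency of the resampling test when the limiting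
probability of `M_{n,0} ≤ M_{n,1}` exceeds the level `α`. -/
theorem resampling_test_inconsistent
    (α : ℝ) (hα0 : 0 < α) (hα1 : α < 1)
    (Ω : ℕ → Type*) [mΩ : ∀ n, MeasurableSpace (Ω n)]
    (P : ∀ n, Measure (Ω n)) [hP : ∀ n, IsProbabilityMeasure (P n)]
    (E F : ℕ → Type*) [mE : ∀ n, MeasurableSpace (E n)] [mF : ∀ n, MeasurableSpace (F n)]
    (B : ℕ → ℕ) (hB : ∀ n, α⁻¹ - 1 < (B n : ℝ))
    (X : ∀ n, Ω n → E n) (hX : ∀ n, Measurable (X n))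
    (W : ∀ n, Fin (B n + 1) → Ω n → F n) (hW : ∀ n i, Measurable (W n i))
    (hiid : ∀ n, iIndepFun (W n) (P n))
    (hident : ∀ n, ∀ i : Fin (B n + 1), (P n).map (W n i) = (P n).map (W n 0))
    (hindepX : ∀ n, IndepFun (fun ω => fun i => W n i ω) (X n) (P n))
    (f g : ∀ n, E n × F n → ℝ) (hf : ∀ n, Measurable (f n)) (hg : ∀ n, Measurable (g n))
    (L : ℝ) (hL : α < L)
    (hlim : Tendsto
      (fun n => ((P n) {ω | f n (X n ω, W n 0 ω) ≤ g n (X n ω, W n 1 ω)}).toReal)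
      atTop (nhds L)) :
    limsup (fun n => ((P n) {ω |
        ((∑ i : Fin (B n),
            if f n (X n ω, W n 0 ω) ≤ g n (X n ω, W n i.succ ω) then (1 : ℝ) else 0) + 1)
          / ((B n : ℝ) + 1) ≤ α}).toReal) atTop < 1 :=
  resampling_test_inconsistent_general α hα1 Ω (mΩ := mΩ) P (hP := hP) E F (mE := mE) (mF := mF) B X
    hX W hW hiid hident hindepX f g hf hg L hL hlim
end

section
/- Let d ≥ 2, let X^1,…,X^d be sets, let k^j : X^j × X^j → ℝ for j ∈ {1,…,d}, let H be a real inner product space, and let Φ : X^1 × ⋯ × X^d → H satisfy ⟨Φ(x), Φ(y)⟩ = Π_{j=1}^d k^j(x^j, y^j) for all x, y. Then for every dataset X of size n, ‖ n^{-1} Σ_{i=1}^n Φ(X_i) − n^{-d} Σ_{i_1,…,i_d=1}^n Φ(X^1_{i_1},…,X^d_{i_d}) ‖^2 = V(X); in particular V(X) ≥ 0. -/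
open Finset

noncomputable section

theorem real_inner_smul_sum_smul_sum {ι κ E : Type*} [Fintype ι] [Fintype κ]
    [NormedAddCommGroup E] [InnerProductSpace ℝ E] (a b : ℝ) (u : ι → E) (v : κ → E) :
    inner ℝ (a • ∑ i, u i) (b • ∑ j, v j) = a * b * ∑ i, ∑ j, inner ℝ (u i) (v j) := by
  rw [real_inner_smul_left, real_inner_smul_right, sum_inner, mul_assoc]
  simp only [inner_sum]

theorem Vstat_eq_norm_sq_mean_embedding_general
    {d n : ℕ}
    (X : Fin d → Type*) (k : ∀ j, X j → X j → ℝ)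
    (H : Type*) [NormedAddCommGroup H] [InnerProductSpace ℝ H]
    (Φ : (∀ j, X j) → H)
    (hΦ : ∀ x y : ∀ j, X j, (inner ℝ (Φ x) (Φ y) : ℝ) = ∏ j, k j (x j) (y j))
    (D : Fin n → ∀ j, X j) :
    ‖(n : ℝ)⁻¹ • ∑ i : Fin n, Φ (D i)
        - ((n : ℝ) ^ d)⁻¹ • ∑ c : Fin d → Fin n, Φ (fun j => D (c j) j)‖ ^ 2
      = Vstat k D ∧ 0 ≤ Vstat k D := by
  refine (fun hnorm => ⟨hnorm, hnorm ▸ sq_nonneg _⟩) ?_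
  rw [norm_sub_sq_real, ← real_inner_self_eq_norm_sq, ← real_inner_self_eq_norm_sq,
    real_inner_smul_sum_smul_sum, real_inner_smul_sum_smul_sum, real_inner_smul_sum_smul_sum]
  simp only [hΦ]
  rw [Vstat]
  ring

/-- the squared empirical dHSIC is the squared distance between
the empirical mean embedding of the joint distribution and that of the product
of the marginals, for any feature map realizing the product kernel. -/
theorem Vstat_eq_norm_sq_mean_embedding
    {d n : ℕ} (hd : 2 ≤ d)
    (X : Fin d → Type*) (k : ∀ j, X j → X j → ℝ)
    (H : Type*) [NormedAddCommGroup H] [InnerProductSpace ℝ H]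
    (Φ : (∀ j, X j) → H)
    (hΦ : ∀ x y : ∀ j, X j, (inner ℝ (Φ x) (Φ y) : ℝ) = ∏ j, k j (x j) (y j))
    (D : Fin n → ∀ j, X j) :
    ‖(n : ℝ)⁻¹ • ∑ i : Fin n, Φ (D i)
        - ((n : ℝ) ^ d)⁻¹ • ∑ c : Fin d → Fin n, Φ (fun j => D (c j) j)‖ ^ 2
      = Vstat k D ∧ 0 ≤ Vstat k D :=
  Vstat_eq_norm_sq_mean_embedding_general X k H Φ hΦ D

end
end
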